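/- arXiv:2002.02586 — 12 statements merged into one kernel-verified Lean document; each statement's English description precedes it below -/
import Mathlib

section
/- Assume ℛ₀ > 1 and let (S*, I*) be an endemic equilibrium. If (S, I) is a traveling wave profile with speed c such that I(ξ) > 0 and 0 < S(ξ) ≤ S₀ for all ξ ∈ ℝ, (S(ξ), I(ξ)) → (S₀, 0) as ξ → −∞, and (S(ξ), I(ξ)) → (S*, I*) as ξ → +∞, then c > 0. -/
/-!
Suppose `c ≤ 0`. Since `ℛ₀ > 1`, the reaction term `g = β S f(I) - μ₂ I` is positive on a
half-line `(-∞, M]`, because there `S ≈ S₀` and `f(I)/I ≈ f'(0)`. Writing `W(x) = ∫_x^{x+1} I`,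
the `I`-equation says exactly that `Φ = c I - d₂ (W - W(· - 1))` is a primitive of `g`, and
`Φ → 0` at `-∞`. Hence `Φ ≥ 0` on `(-∞, M]`, and as `c I ≤ 0` this gives `W(x) ≤ W(x - 1)`
there. So `W(M - n) ≥ W(M) > 0` for every `n`, contradicting `W → 0` at `-∞`.
-/

open Filter Set Topology
open scoped Interval

noncomputable def windowIntegral (u : ℝ → ℝ) (h x : ℝ) : ℝ := ∫ t in x..x + h, u t

theorem hasDerivAt_windowIntegral {u : ℝ → ℝ} (hu : Continuous u) (h x : ℝ) :
    HasDerivAt (windowIntegral u h) (u (x + h) - u x) x := by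
  have hF := fun y => (hu.integral_hasStrictDerivAt 0 y).hasDerivAt
  have hW : windowIntegral u h = fun y => (∫ t in 0..y + h, u t) - ∫ t in 0..y, u t := by
    funext y
    exact (intervalIntegral.integral_interval_sub_left (hu.intervalIntegrable _ _)
      (hu.intervalIntegrable _ _)).symm
  rw [hW]
  exact ((hF (x + h)).comp_add_const x h).sub (hF x)

theorem tendsto_windowIntegral_atBot {u : ℝ → ℝ} (hu : Tendsto u atBot (𝓝 0)) (h : ℝ) :
    Tendsto (windowIntegral u h) atBot (𝓝 0) := by
  rw [Metric.tendsto_nhds]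
  intro ε hε
  have hδ : 0 < ε / (|h| + 1) := by positivity
  obtain ⟨A, hA⟩ := eventually_atBot.mp ((Metric.tendsto_nhds.mp hu) _ hδ)
  filter_upwards [eventually_le_atBot (A - |h|)] with x hx
  have hbound : ∀ t ∈ Ι x (x + h), ‖u t‖ ≤ ε / (|h| + 1) := by
    intro t ht
    have htA : t ≤ A := calc
      t ≤ max x (x + h) := ht.2
      _ ≤ x + |h| := max_le (by linarith [abs_nonneg h]) (by linarith [le_abs_self h])
      _ ≤ A := by linarith
    simpa using (hA t htA).le
  have hle := intervalIntegral.norm_integral_le_of_norm_le_const hbound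
  rw [add_sub_cancel_left] at hle
  have hlt : ε / (|h| + 1) * |h| < ε := by
    rw [div_mul_eq_mul_div, div_lt_iff₀ (by positivity)]
    nlinarith [abs_nonneg h]
  rw [Real.dist_eq, sub_zero]
  exact hle.trans_lt hlt

theorem windowIntegral_pos {u : ℝ → ℝ} (hu : Continuous u) (hpos : ∀ t, 0 < u t) {h : ℝ}
    (hh : 0 < h) (x : ℝ) : 0 < windowIntegral u h x :=
  intervalIntegral.intervalIntegral_pos_of_pos (hu.intervalIntegrable _ _) hpos (by linarith)

noncomputable def latticeFlux (c d : ℝ) (u : ℝ → ℝ) (x : ℝ) : ℝ :=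
  c * u x - d * (windowIntegral u 1 x - windowIntegral u 1 (x - 1))

theorem hasDerivAt_latticeFlux (c d : ℝ) {u : ℝ → ℝ} (hu : ContDiff ℝ 1 u) (x : ℝ) :
    HasDerivAt (latticeFlux c d u) (c * deriv u x - d * (u (x + 1) + u (x - 1) - 2 * u x)) x := by
  have hW := hasDerivAt_windowIntegral hu.continuous 1
  have h := ((hu.differentiable one_ne_zero x).hasDerivAt.const_mul c).sub
    (((hW x).sub ((hW (x - 1)).comp_sub_const x 1)).const_mul d)
  refine h.congr_deriv ?_
  rw [sub_add_cancel]
  ring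

theorem tendsto_latticeFlux_atBot (c d : ℝ) {u : ℝ → ℝ} (hu : Tendsto u atBot (𝓝 0)) :
    Tendsto (latticeFlux c d u) atBot (𝓝 0) := by
  have hW := tendsto_windowIntegral_atBot hu 1
  have hW' : Tendsto (fun y => windowIntegral u 1 (y - 1)) atBot (𝓝 0) :=
    hW.comp (tendsto_atBot_add_const_right _ (-1) tendsto_id)
  have h := (hu.const_mul c).sub ((hW.sub hW').const_mul d)
  rw [sub_self, mul_zero, mul_zero, sub_zero] at h
  exact h

theorem eventually_mul_lt_mul_of_hasDerivAt {α : Type*} {l : Filter α} {f : ℝ → ℝ} {f' a₀ μ : ℝ}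
    {a v : α → ℝ} (hf0 : f 0 = 0) (hf : HasDerivAt f f' 0) (ha : Tendsto a l (𝓝 a₀))
    (hv : Tendsto v l (𝓝[>] 0)) (hμ : μ < a₀ * f') :
    ∀ᶠ ξ in l, μ * v ξ < a ξ * f (v ξ) := by
  have hslope : Tendsto (fun ξ => f (v ξ) / v ξ) l (𝓝 f') := by
    have h := (hasDerivAt_iff_tendsto_slope.mp hf).comp
      (hv.mono_right (nhdsWithin_mono _ fun _ hx => ne_of_gt hx))
    simpa [Function.comp_def, slope_def_field, hf0] using h
  filter_upwards [(ha.mul hslope).eventually (eventually_gt_nhds hμ),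
    hv.eventually self_mem_nhdsWithin] with ξ hlt (hvpos : 0 < v ξ)
  calc μ * v ξ < a ξ * (f (v ξ) / v ξ) * v ξ := mul_lt_mul_of_pos_right hlt hvpos
    _ = a ξ * f (v ξ) := by field_simp

theorem le_of_hasDerivAt_nonneg_of_tendsto_atBot {Φ φ : ℝ → ℝ} {M L x : ℝ}
    (hΦ : ∀ y, HasDerivAt Φ (φ y) y) (hφ : ∀ y ≤ M, 0 ≤ φ y) (hlim : Tendsto Φ atBot (𝓝 L))
    (hx : x ≤ M) : L ≤ Φ x := by
  have hmono : MonotoneOn Φ (Iic M) :=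
    monotoneOn_of_hasDerivWithinAt_nonneg (convex_Iic M)
      (fun y _ => (hΦ y).continuousAt.continuousWithinAt) (fun y _ => (hΦ y).hasDerivWithinAt)
      (fun y hy => hφ y (interior_subset hy : y ∈ Iic M))
  refine le_of_tendsto hlim ?_
  filter_upwards [eventually_le_atBot x] with y hy
  exact hmono (hy.trans hx) hx hy

theorem le_of_tendsto_atBot_of_le_sub_one {D : ℝ → ℝ} {M L : ℝ}
    (hstep : ∀ b ≤ M, D b ≤ D (b - 1)) (hlim : Tendsto D atBot (𝓝 L)) : D M ≤ L := by
  have hle : ∀ n : ℕ, D M ≤ D (M - n) := by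
    intro n
    induction n with
    | zero => simp
    | succ n ih =>
      have hstep' := hstep (M - n) (by linarith [n.cast_nonneg (α := ℝ)])
      rw [Nat.cast_succ, ← sub_sub]
      exact ih.trans hstep'
  have hshift : Tendsto (fun n : ℕ => M - n) atTop atBot :=
    tendsto_atBot_add_const_left _ M (tendsto_neg_atTop_atBot.comp tendsto_natCast_atTop_atTop)
  exact ge_of_tendsto (hlim.comp hshift) (Eventually.of_forall hle)

theorem wave_speed_pos_general
    (d₂ Λ β μ₁ μ₂ : ℝ) (hd₂ : 0 < d₂) (hμ₂ : 0 < μ₂)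
    (f : ℝ → ℝ) (hf0 : f 0 = 0) (hfC1 : ContDiff ℝ 1 f)
    (hR₀ : 1 < β * (Λ / μ₁) * deriv f 0 / μ₂)
    (c : ℝ) (S I : ℝ → ℝ) (hI : ContDiff ℝ 1 I)
    (hIeq : ∀ ξ : ℝ, c * deriv I ξ =
      d₂ * (I (ξ + 1) + I (ξ - 1) - 2 * I ξ) + β * S ξ * f (I ξ) - μ₂ * I ξ)
    (hpos : ∀ ξ : ℝ, 0 < I ξ ∧ 0 < S ξ ∧ S ξ ≤ Λ / μ₁)
    (hbot : Tendsto (fun ξ : ℝ => (S ξ, I ξ)) atBot (nhds (Λ / μ₁, 0))) :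
    0 < c := by
  by_contra! hc
  have hIc : Continuous I := hI.continuous
  have hIpos : ∀ ξ, 0 < I ξ := fun ξ => (hpos ξ).1
  have hSbot : Tendsto S atBot (𝓝 (Λ / μ₁)) := (continuous_fst.tendsto _).comp hbot
  have hIbot : Tendsto I atBot (𝓝 0) := (continuous_snd.tendsto _).comp hbot
  obtain ⟨M, hreact⟩ := eventually_atBot.mp <|
    eventually_mul_lt_mul_of_hasDerivAt (μ := μ₂) hf0
      (hfC1.differentiable one_ne_zero 0).hasDerivAt (hSbot.const_mul β)
      (tendsto_nhdsWithin_iff.mpr ⟨hIbot, Eventually.of_forall hIpos⟩)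
      ((one_lt_div hμ₂).mp hR₀)
  have hWstep : ∀ b ≤ M, windowIntegral I 1 b ≤ windowIntegral I 1 (b - 1) := by
    intro b hb
    have hflux : 0 ≤ latticeFlux c d₂ I b :=
      le_of_hasDerivAt_nonneg_of_tendsto_atBot (hasDerivAt_latticeFlux c d₂ hI)
        (fun y hy => by linarith [hIeq y, hreact y hy]) (tendsto_latticeFlux_atBot c d₂ hIbot) hb
    unfold latticeFlux at hflux
    nlinarith [hIpos b]
  have hWpos := windowIntegral_pos hIc hIpos one_pos M
  linarith [le_of_tendsto_atBot_of_le_sub_one hWstep (tendsto_windowIntegral_atBot hIbot 1)]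

/-- **Positivity of the wave speed** (Lemma 4.1).
Assume `ℛ₀ > 1` and let `(S*, I*)` be an endemic equilibrium.  If `(S, I)` is a
traveling wave profile with speed `c` such that `I(ξ) > 0`, `0 < S(ξ) ≤ S₀` for all
`ξ`, `(S, I) → (S₀, 0)` at `-∞` and `(S, I) → (S*, I*)` at `+∞`, then `c > 0`. -/
theorem wave_speed_pos
    (d₁ d₂ Λ β μ₁ μ₂ : ℝ) (hd₁ : 0 < d₁) (hd₂ : 0 < d₂) (hΛ : 0 < Λ)
    (hβ : 0 < β) (hμ₁ : 0 < μ₁) (hμ₂ : 0 < μ₂)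
    (f : ℝ → ℝ) (hf0 : f 0 = 0) (hfC1 : ContDiff ℝ 1 f)
    (hf' : ∀ I : ℝ, 0 ≤ I → 0 < deriv f I)
    (hfratio : ∀ I J : ℝ, 0 < I → I ≤ J → f J / J ≤ f I / I)
    (hR₀ : 1 < β * (Λ / μ₁) * deriv f 0 / μ₂)
    (Sstar Istar : ℝ) (hSstar : 0 < Sstar) (hIstar : 0 < Istar)
    (heq1 : Λ - β * Sstar * f Istar - μ₁ * Sstar = 0)
    (heq2 : β * Sstar * f Istar - μ₂ * Istar = 0)
    (c : ℝ) (S I : ℝ → ℝ) (hS : ContDiff ℝ 1 S) (hI : ContDiff ℝ 1 I)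
    (hSeq : ∀ ξ : ℝ, c * deriv S ξ =
      d₁ * (S (ξ + 1) + S (ξ - 1) - 2 * S ξ) + Λ - μ₁ * S ξ - β * S ξ * f (I ξ))
    (hIeq : ∀ ξ : ℝ, c * deriv I ξ =
      d₂ * (I (ξ + 1) + I (ξ - 1) - 2 * I ξ) + β * S ξ * f (I ξ) - μ₂ * I ξ)
    (hpos : ∀ ξ : ℝ, 0 < I ξ ∧ 0 < S ξ ∧ S ξ ≤ Λ / μ₁)
    (hbot : Tendsto (fun ξ : ℝ => (S ξ, I ξ)) atBot (nhds (Λ / μ₁, 0)))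
    (htop : Tendsto (fun ξ : ℝ => (S ξ, I ξ)) atTop (nhds (Sstar, Istar))) :
    0 < c :=
  wave_speed_pos_general d₂ Λ β μ₁ μ₂ hd₂ hμ₂ f hf0 hfC1 hR₀ c S I hI hIeq hpos hbot
end

section
/- Assume b > μ₂ (i.e. the basic reproduction number exceeds 1). Then there exist c* > 0 and λ* > 0 such that Δ(λ*, c*) = 0 and d₂(e^{λ*} − e^{−λ*}) − c* = 0; moreover λ* is the unique positive root of the equation Δ(λ, c*) = 0 in λ. -/
open Real

/-- Auxiliary: the function whose zero gives λ*. -/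
private lemma exists_lamstar (d₂ μ₂ b : ℝ) (hd₂ : 0 < d₂) (hb : μ₂ < b) :
    ∃ lam : ℝ, 0 < lam ∧
      d₂ * (lam * (Real.exp lam - Real.exp (-lam)) -
        (Real.exp lam + Real.exp (-lam) - 2)) - (b - μ₂) = 0 := by
  set φ : ℝ → ℝ := fun x =>
    d₂ * (x * (Real.exp x - Real.exp (-x)) - (Real.exp x + Real.exp (-x) - 2)) - (b - μ₂)
    with hφ
  have hcont : Continuous φ := by fun_prop
  set L : ℝ := max 2 ((b - μ₂) / d₂) with hL
  have hL2 : (2:ℝ) ≤ L := le_max_left _ _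
  have hLb : (b - μ₂) / d₂ ≤ L := le_max_right _ _
  have hL0 : (0:ℝ) ≤ L := by linarith
  have hφ0 : φ 0 ≤ 0 := by simp [hφ]; linarith
  have hexpL : 1 + L + L ^ 2 / 4 ≤ Real.exp L := by
    have h := Real.add_one_le_exp (L/2)
    have he : Real.exp L = Real.exp (L/2) * Real.exp (L/2) := by
      rw [← Real.exp_add]; ring_nf
    nlinarith [Real.exp_pos (L/2)]
  have hexpnL : Real.exp (-L) ≤ 1 := Real.exp_le_one_iff.mpr (by linarith)
  have hexpnL0 : 0 < Real.exp (-L) := Real.exp_pos _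
  have hX : L ≤ L * (Real.exp L - Real.exp (-L)) - (Real.exp L + Real.exp (-L) - 2) := by
    nlinarith [mul_le_mul_of_nonneg_left hexpL (by linarith : (0:ℝ) ≤ L - 1),
      mul_le_mul_of_nonneg_left hexpnL (by linarith : (0:ℝ) ≤ L + 1)]
  have hφL : 0 ≤ φ L := by
    have h1 : b - μ₂ ≤ d₂ * L := by
      rw [div_le_iff₀ hd₂] at hLb; linarith
    have h2 : d₂ * L ≤ d₂ * (L * (Real.exp L - Real.exp (-L)) -
        (Real.exp L + Real.exp (-L) - 2)) := by
      exact mul_le_mul_of_nonneg_left hX hd₂.le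
    simp only [hφ]; linarith
  obtain ⟨lam, hlammem, hlameq⟩ :=
    intermediate_value_Icc hL0 hcont.continuousOn (Set.mem_Icc.mpr ⟨hφ0, hφL⟩)
  refine ⟨lam, ?_, hlameq⟩
  rcases lt_or_eq_of_le hlammem.1 with h | h
  · exact h
  · exfalso; rw [← h] at hlameq; simp [hφ] at hlameq; linarith

/-- **Existence of the critical pair** (Lemma 2.1).
Assume `b > μ₂`.  Then there exist `c* > 0` and `λ* > 0` with `Δ(λ*, c*) = 0` and
`∂Δ/∂λ(λ*, c*) = d₂(e^{λ*} − e^{−λ*}) − c* = 0`; moreover `λ*` is the unique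
positive root of `Δ(·, c*) = 0`. -/
theorem exists_critical_pair
    (d₂ μ₂ b : ℝ) (hd₂ : 0 < d₂) (hμ₂ : 0 < μ₂) (hb : μ₂ < b) :
    ∃ cstar lamstar : ℝ, 0 < cstar ∧ 0 < lamstar ∧
      d₂ * (Real.exp lamstar + Real.exp (-lamstar) - 2) - cstar * lamstar + b - μ₂ = 0 ∧
      d₂ * (Real.exp lamstar - Real.exp (-lamstar)) - cstar = 0 ∧
      (∀ lam : ℝ, 0 < lam →
        d₂ * (Real.exp lam + Real.exp (-lam) - 2) - cstar * lam + b - μ₂ = 0 →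
        lam = lamstar) := by
  obtain ⟨ls, hls, heq⟩ := exists_lamstar d₂ μ₂ b hd₂ hb
  set cs : ℝ := d₂ * (Real.exp ls - Real.exp (-ls)) with hcs
  have hexp : Real.exp (-ls) < Real.exp ls := Real.exp_lt_exp.mpr (by linarith)
  have hcspos : 0 < cs := by
    apply mul_pos hd₂; linarith
  refine ⟨cs, ls, hcspos, hls, by rw [hcs]; ring_nf; ring_nf at heq; linarith,
    by rw [hcs]; ring, ?_⟩
  intro lam _ hΔ
  by_contra hne
  have hd : lam - ls ≠ 0 := sub_ne_zero_of_ne hne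
  have h1 : (lam - ls) + 1 < Real.exp (lam - ls) := Real.add_one_lt_exp hd
  have h2 : (ls - lam) + 1 < Real.exp (ls - lam) :=
    Real.add_one_lt_exp (by simpa [neg_sub] using neg_ne_zero.mpr hd)
  have e1 : Real.exp ls * ((lam - ls) + 1) < Real.exp lam := by
    have := mul_lt_mul_of_pos_left h1 (Real.exp_pos ls)
    rwa [← Real.exp_add, add_sub_cancel] at this
  have e2 : Real.exp (-ls) * ((ls - lam) + 1) < Real.exp (-lam) := by
    have := mul_lt_mul_of_pos_left h2 (Real.exp_pos (-ls))
    rwa [← Real.exp_add, show -ls + (ls - lam) = -lam by ring] at this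
  have hΔs : d₂ * (Real.exp ls + Real.exp (-ls) - 2) - cs * ls + b - μ₂ = 0 := by
    rw [hcs]; ring_nf; ring_nf at heq; linarith
  nlinarith [mul_lt_mul_of_pos_left e1 hd₂, mul_lt_mul_of_pos_left e2 hd₂]
end

section
/- Assume b > μ₂, let (λ*, c*) be the critical pair (Δ(λ*, c*) = 0 and d₂(e^{λ*} − e^{−λ*}) = c*), and let c > c*. Then there exist λ₁ and λ₂ with 0 < λ₁ < λ* < λ₂ such that Δ(λ₁, c) = Δ(λ₂, c) = 0; moreover Δ(λ, c) > 0 for 0 < λ < λ₁, Δ(λ, c) < 0 for λ₁ < λ < λ₂, and Δ(λ, c) > 0 for λ > λ₂. -/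
open Real Set

/-!
`Δ(·, c)` is strictly convex, positive at `0` (where it equals `b - μ₂`), negative at `λ*`
(for `λ > 0` it strictly decreases in `c`, and `Δ(λ*, c*) = 0`), and positive for large `λ`
(because `e^λ + e^{-λ} - 2 ≥ λ² / 2`). The intermediate value theorem gives a zero on each
side of `λ*`, and strict convexity forces the signs: negative strictly between the two zeros,
positive outside them.
-/

namespace StrictConvexOn

variable {s : Set ℝ} {f : ℝ → ℝ} {x x₁ x₂ : ℝ}

lemma neg_of_mem_Ioo_of_eq_zero (hf : StrictConvexOn ℝ s f) (h₁ : x₁ ∈ s) (h₂ : x₂ ∈ s)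
    (hf₁ : f x₁ = 0) (hf₂ : f x₂ = 0) (hx : x ∈ Ioo x₁ x₂) : f x < 0 := by
  simpa [hf₁, hf₂] using
    hf.lt_on_openSegment h₁ h₂ (hx.1.trans hx.2).ne (Ioo_subset_openSegment hx)

lemma pos_of_lt_of_eq_zero (hf : StrictConvexOn ℝ s f) (hx : x ∈ s) (h₂ : x₂ ∈ s)
    (hf₁ : f x₁ = 0) (hf₂ : f x₂ = 0) (hx₁ : x < x₁) (h₁₂ : x₁ < x₂) : 0 < f x := by
  have hslope := hf.slope_strict_mono_adjacent hx h₂ hx₁ h₁₂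
  rw [hf₁, hf₂, sub_self, zero_div, zero_sub, neg_div, neg_lt_zero] at hslope
  exact (div_pos_iff_of_pos_right (sub_pos.2 hx₁)).1 hslope

lemma pos_of_gt_of_eq_zero (hf : StrictConvexOn ℝ s f) (h₁ : x₁ ∈ s) (hx : x ∈ s)
    (hf₁ : f x₁ = 0) (hf₂ : f x₂ = 0) (h₁₂ : x₁ < x₂) (hx₂ : x₂ < x) : 0 < f x := by
  have hslope := hf.slope_strict_mono_adjacent h₁ hx h₁₂ hx₂
  rw [hf₁, hf₂, sub_self, zero_div, sub_zero] at hslope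
  exact (div_pos_iff_of_pos_right (sub_pos.2 hx₂)).1 hslope

theorem exists_two_zeros_of_pos_neg_pos (hf : StrictConvexOn ℝ s f) (hcont : ContinuousOn f s)
    {p m q : ℝ} (hp : p ∈ s) (hq : q ∈ s) (hpm : p < m) (hmq : m < q)
    (hfp : 0 < f p) (hfm : f m < 0) (hfq : 0 < f q) :
    ∃ x₁ x₂, p < x₁ ∧ x₁ < m ∧ m < x₂ ∧ f x₁ = 0 ∧ f x₂ = 0 ∧
      (∀ x ∈ s, x < x₁ → 0 < f x) ∧ (∀ x ∈ Ioo x₁ x₂, f x < 0) ∧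
      (∀ x ∈ s, x₂ < x → 0 < f x) := by
  have hIcc : Icc p q ⊆ s := hf.1.ordConnected.out hp hq
  obtain ⟨x₁, ⟨hpx₁, hx₁m⟩, hfx₁⟩ := intermediate_value_Ioo' hpm.le
    (hcont.mono ((Icc_subset_Icc_right hmq.le).trans hIcc)) ⟨hfm, hfp⟩
  obtain ⟨x₂, ⟨hmx₂, hx₂q⟩, hfx₂⟩ := intermediate_value_Ioo hmq.le
    (hcont.mono ((Icc_subset_Icc_left hpm.le).trans hIcc)) ⟨hfm, hfq⟩
  have h₁ : x₁ ∈ s := hIcc ⟨hpx₁.le, (hx₁m.trans hmq).le⟩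
  have h₂ : x₂ ∈ s := hIcc ⟨(hpm.trans hmx₂).le, hx₂q.le⟩
  have h₁₂ : x₁ < x₂ := hx₁m.trans hmx₂
  exact ⟨x₁, x₂, hpx₁, hx₁m, hmx₂, hfx₁, hfx₂,
    fun x hx hxx₁ => hf.pos_of_lt_of_eq_zero hx h₂ hfx₁ hfx₂ hxx₁ h₁₂,
    fun x hx => hf.neg_of_mem_Ioo_of_eq_zero h₁ h₂ hfx₁ hfx₂ hx,
    fun x hx hx₂x => hf.pos_of_gt_of_eq_zero h₁ hx hfx₁ hfx₂ h₁₂ hx₂x⟩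

end StrictConvexOn

lemma sq_div_two_le_exp_add_exp_neg_sub_two {x : ℝ} (hx : 0 ≤ x) :
    x ^ 2 / 2 ≤ exp x + exp (-x) - 2 := by
  linarith [quadratic_le_exp_of_nonneg hx, add_one_le_exp (-x)]

noncomputable def characteristicFn (d₂ μ₂ b c lam : ℝ) : ℝ :=
  d₂ * (exp lam + exp (-lam) - 2) - c * lam + b - μ₂

section characteristicFn

variable {d₂ μ₂ b c lam : ℝ}

lemma continuous_characteristicFn : Continuous (characteristicFn d₂ μ₂ b c) := by
  unfold characteristicFn
  fun_prop

lemma strictConvexOn_characteristicFn (hd₂ : 0 < d₂) :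
    StrictConvexOn ℝ univ (characteristicFn d₂ μ₂ b c) := by
  refine ⟨convex_univ, fun x _ y _ hxy s t hs ht hst => ?_⟩
  have hexp := strictConvexOn_exp.2 (mem_univ x) (mem_univ y) hxy hs ht hst
  have hexp_neg :=
    strictConvexOn_exp.2 (mem_univ (-x)) (mem_univ (-y)) (neg_injective.ne hxy) hs ht hst
  simp only [smul_eq_mul, characteristicFn] at hexp hexp_neg ⊢
  rw [show -(s * x + t * y) = s * -x + t * -y by ring]
  obtain rfl : t = 1 - s := by linarith
  linarith [mul_lt_mul_of_pos_left (add_lt_add hexp hexp_neg) hd₂]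

lemma characteristicFn_zero : characteristicFn d₂ μ₂ b c 0 = b - μ₂ := by
  norm_num [characteristicFn]

lemma characteristicFn_lt_of_speed_lt {c' : ℝ} (hc : c' < c) (hlam : 0 < lam) :
    characteristicFn d₂ μ₂ b c lam < characteristicFn d₂ μ₂ b c' lam := by
  unfold characteristicFn
  linarith [mul_pos (sub_pos.2 hc) hlam]

lemma characteristicFn_pos_of_two_mul_speed_le (hd₂ : 0 ≤ d₂) (hb : μ₂ < b) (hlam : 0 ≤ lam)
    (hc : 2 * c ≤ d₂ * lam) : 0 < characteristicFn d₂ μ₂ b c lam := by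
  unfold characteristicFn
  nlinarith [mul_le_mul_of_nonneg_left (sq_div_two_le_exp_add_exp_neg_sub_two hlam) hd₂,
    mul_nonneg hlam (sub_nonneg.2 hc)]

end characteristicFn

theorem characteristic_two_roots_of_speed_gt_critical_general
    (d₂ μ₂ b : ℝ) (hd₂ : 0 < d₂) (hb : μ₂ < b)
    (lamstar cstar : ℝ) (hlamstar : 0 < lamstar)
    (hΔstar : d₂ * (Real.exp lamstar + Real.exp (-lamstar) - 2)
      - cstar * lamstar + b - μ₂ = 0)
    (c : ℝ) (hc : cstar < c) :
    ∃ lam₁ lam₂ : ℝ, 0 < lam₁ ∧ lam₁ < lamstar ∧ lamstar < lam₂ ∧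
      d₂ * (Real.exp lam₁ + Real.exp (-lam₁) - 2) - c * lam₁ + b - μ₂ = 0 ∧
      d₂ * (Real.exp lam₂ + Real.exp (-lam₂) - 2) - c * lam₂ + b - μ₂ = 0 ∧
      (∀ lam : ℝ, 0 < lam → lam < lam₁ →
        0 < d₂ * (Real.exp lam + Real.exp (-lam) - 2) - c * lam + b - μ₂) ∧
      (∀ lam : ℝ, lam₁ < lam → lam < lam₂ →
        d₂ * (Real.exp lam + Real.exp (-lam) - 2) - c * lam + b - μ₂ < 0) ∧
      (∀ lam : ℝ, lam₂ < lam →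
        0 < d₂ * (Real.exp lam + Real.exp (-lam) - 2) - c * lam + b - μ₂) := by
  set L := max (lamstar + 1) (2 * c / d₂)
  have hL : lamstar < L := (lt_add_one lamstar).trans_le (le_max_left _ _)
  have hΔ0 : 0 < characteristicFn d₂ μ₂ b c 0 := by
    rw [characteristicFn_zero]
    exact sub_pos.2 hb
  have hΔstar' : characteristicFn d₂ μ₂ b c lamstar < 0 :=
    (characteristicFn_lt_of_speed_lt hc hlamstar).trans_eq hΔstar
  have hΔL : 0 < characteristicFn d₂ μ₂ b c L :=
    characteristicFn_pos_of_two_mul_speed_le hd₂.le hb (hlamstar.trans hL).le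
      ((div_le_iff₀' hd₂).1 (le_max_right _ _))
  obtain ⟨lam₁, lam₂, h0₁, h₁star, hstar₂, hroot₁, hroot₂, hpos₁, hneg, hpos₂⟩ :=
    (strictConvexOn_characteristicFn hd₂).exists_two_zeros_of_pos_neg_pos
      continuous_characteristicFn.continuousOn (mem_univ 0) (mem_univ L) hlamstar hL
      hΔ0 hΔstar' hΔL
  exact ⟨lam₁, lam₂, h0₁, h₁star, hstar₂, hroot₁, hroot₂,
    fun lam _ h => hpos₁ lam (mem_univ lam) h, fun lam h₁ h₂ => hneg lam ⟨h₁, h₂⟩,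
    fun lam h => hpos₂ lam (mem_univ lam) h⟩

/-- **Two positive roots for supercritical speeds** (Lemma 2.1 (iii) and (2.7)).
Assume `b > μ₂`, let `(λ*, c*)` be the critical pair and let `c > c*`.  Then
`Δ(·, c)` has two positive roots `λ₁ < λ* < λ₂`, with `Δ(λ, c) > 0` for
`0 < λ < λ₁`, `Δ(λ, c) < 0` for `λ₁ < λ < λ₂` and `Δ(λ, c) > 0` for `λ > λ₂`. -/
theorem characteristic_two_roots_of_speed_gt_critical
    (d₂ μ₂ b : ℝ) (hd₂ : 0 < d₂) (hμ₂ : 0 < μ₂) (hb : μ₂ < b)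
    (lamstar cstar : ℝ) (hlamstar : 0 < lamstar) (hcstar : 0 < cstar)
    (hΔstar : d₂ * (Real.exp lamstar + Real.exp (-lamstar) - 2)
      - cstar * lamstar + b - μ₂ = 0)
    (hdΔstar : d₂ * (Real.exp lamstar - Real.exp (-lamstar)) = cstar)
    (c : ℝ) (hc : cstar < c) :
    ∃ lam₁ lam₂ : ℝ, 0 < lam₁ ∧ lam₁ < lamstar ∧ lamstar < lam₂ ∧
      d₂ * (Real.exp lam₁ + Real.exp (-lam₁) - 2) - c * lam₁ + b - μ₂ = 0 ∧
      d₂ * (Real.exp lam₂ + Real.exp (-lam₂) - 2) - c * lam₂ + b - μ₂ = 0 ∧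
      (∀ lam : ℝ, 0 < lam → lam < lam₁ →
        0 < d₂ * (Real.exp lam + Real.exp (-lam) - 2) - c * lam + b - μ₂) ∧
      (∀ lam : ℝ, lam₁ < lam → lam < lam₂ →
        d₂ * (Real.exp lam + Real.exp (-lam) - 2) - c * lam + b - μ₂ < 0) ∧
      (∀ lam : ℝ, lam₂ < lam →
        0 < d₂ * (Real.exp lam + Real.exp (-lam) - 2) - c * lam + b - μ₂) :=
  characteristic_two_roots_of_speed_gt_critical_general d₂ μ₂ b hd₂ hb lamstar cstar hlamstar hΔstar
    c hc
end

section
/- Assume b > μ₂, let (λ*, c*) be the critical pair (Δ(λ*, c*) = 0 and d₂(e^{λ*} − e^{−λ*}) = c*), and let 0 < c < c*. Then Δ(λ, c) > 0 for all λ ≥ 0. -/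
open Real

/-- **Positivity of the characteristic function for subcritical speeds**
(Lemma 2.1 (ii)).  Assume `b > μ₂`, let `(λ*, c*)` be the critical pair and let
`0 < c < c*`.  Then `Δ(λ, c) > 0` for all `λ ≥ 0`. -/
theorem characteristic_pos_of_speed_lt_critical
    (d₂ μ₂ b : ℝ) (hd₂ : 0 < d₂) (hμ₂ : 0 < μ₂) (hb : μ₂ < b)
    (lamstar cstar : ℝ) (hlamstar : 0 < lamstar) (hcstar : 0 < cstar)
    (hΔstar : d₂ * (Real.exp lamstar + Real.exp (-lamstar) - 2)
      - cstar * lamstar + b - μ₂ = 0)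
    (hdΔstar : d₂ * (Real.exp lamstar - Real.exp (-lamstar)) = cstar)
    (c : ℝ) (hc0 : 0 < c) (hc : c < cstar) :
    ∀ lam : ℝ, 0 ≤ lam →
      0 < d₂ * (Real.exp lam + Real.exp (-lam) - 2) - c * lam + b - μ₂ := by
  intro lam hlam
  rcases eq_or_lt_of_le hlam with h0 | h0
  · simp [← h0]; linarith
  · -- convexity tangent line estimates
    have h1 : lam - lamstar + 1 ≤ Real.exp (lam - lamstar) := Real.add_one_le_exp _
    have h2 : lamstar - lam + 1 ≤ Real.exp (lamstar - lam) := Real.add_one_le_exp _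
    have e1 : Real.exp (lam - lamstar) * Real.exp lamstar = Real.exp lam := by
      rw [← Real.exp_add]; ring_nf
    have e2 : Real.exp (lamstar - lam) * Real.exp (-lamstar) = Real.exp (-lam) := by
      rw [← Real.exp_add]; ring_nf
    have hp1 : 0 < Real.exp lamstar := Real.exp_pos _
    have hp2 : 0 < Real.exp (-lamstar) := Real.exp_pos _
    have k1 : (lam - lamstar + 1) * Real.exp lamstar ≤ Real.exp lam := by
      rw [← e1]; exact mul_le_mul_of_nonneg_right h1 hp1.le
    have k2 : (lamstar - lam + 1) * Real.exp (-lamstar) ≤ Real.exp (-lam) := by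
      rw [← e2]; exact mul_le_mul_of_nonneg_right h2 hp2.le
    nlinarith [mul_le_mul_of_nonneg_left k1 hd₂.le, mul_le_mul_of_nonneg_left k2 hd₂.le,
      mul_pos (sub_pos.mpr hc) h0]
end

section
/- Assume ℛ₀ > 1 and c > c*, and let λ₁ be the smaller positive root of Δ(·, c) = 0. Then there exist ε₁ ∈ (0, λ₁) and M₁ > 1 such that the function S⁻(ξ) := max{S₀(1 − M₁e^{ε₁ξ}), 0} satisfies, for every ξ ≠ 𝔛₁ := (1/ε₁)·ln(1/M₁), the differential inequality c·(S⁻)'(ξ) ≤ d₁(S⁻(ξ+1) + S⁻(ξ−1) − 2S⁻(ξ)) + Λ − μ₁·S⁻(ξ) − β·S⁻(ξ)·f(e^{λ₁ξ}). In particular the conclusion holds whenever ε₁ ∈ (0, λ₁) is small enough that μ₁ + cε₁ > d₁(e^{ε₁} + e^{−ε₁} − 2) and M₁ > 1 satisfies M₁ ≥ β·f'(0)/(μ₁ + cε₁ − d₁(e^{ε₁} + e^{−ε₁} − 2)). -/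
/-!
Left of `𝔛₁` the function `S⁻` is the smooth branch `S₀ (1 - M e^{εξ})`, and both neighbours
`S⁻(ξ ± 1)` lie above the same branch. Since `Λ = μ₁ S₀`, the inequality then reduces to
`β S⁻(ξ) f(e^{λ₁ξ}) ≤ S₀ M e^{εξ} (μ₁ + cε - d₁ (e^ε + e^{-ε} - 2))`. Here `ξ < 𝔛₁ < 0` and
`ε < λ₁` give `e^{λ₁ξ} ≤ e^{εξ}`, while monotonicity of `f(I)/I` gives `f(I) ≤ f'(0) I`, so the
left side is at most `β S₀ f'(0) e^{εξ}`, which the choice of `M` absorbs. Right of `𝔛₁`, `S⁻`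
vanishes near `ξ` and the inequality reads `0 ≤ d₁ (S⁻(ξ + 1) + S⁻(ξ - 1)) + Λ`.
A suitable `ε` exists because the margin `μ₁ + cε - d₁ (e^ε + e^{-ε} - 2)` tends to `μ₁ > 0`
as `ε → 0`.
-/

open Real Filter Topology Set

lemma nonneg_of_map_zero_of_deriv_nonneg {f : ℝ → ℝ} (hf : Differentiable ℝ f) (hf0 : f 0 = 0)
    (hf' : ∀ x, 0 < x → 0 ≤ deriv f x) {x : ℝ} (hx : 0 ≤ x) : 0 ≤ f x := by
  have hmono : MonotoneOn f (Ici 0) :=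
    monotoneOn_of_deriv_nonneg (convex_Ici 0) hf.continuous.continuousOn hf.differentiableOn
      (fun x hx => hf' x (by simpa only [interior_Ici, mem_Ioi] using hx))
  simpa only [hf0] using hmono (mem_Ici.mpr le_rfl) hx hx

lemma le_mul_of_hasDerivAt_zero_of_antitoneOn_div {f : ℝ → ℝ} {k : ℝ} (hf : HasDerivAt f k 0)
    (hf0 : f 0 = 0) (hratio : AntitoneOn (fun x => f x / x) (Ioi 0)) {x : ℝ} (hx : 0 < x) :
    f x ≤ k * x := by
  have hslope : Tendsto (fun t => f t / t) (𝓝[>] 0) (𝓝 k) := by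
    simpa only [zero_add, hf0, sub_zero, smul_eq_mul, inv_mul_eq_div] using
      hf.tendsto_slope_zero_right
  have hbound : ∀ᶠ t in 𝓝[>] 0, f x / x ≤ f t / t := by
    filter_upwards [Ioc_mem_nhdsGT hx] with t ht
    exact hratio ht.1 hx ht.2
  exact (div_le_iff₀ hx).mp (ge_of_tendsto hslope hbound)

lemma exists_mem_Ioo_mul_exp_add_exp_neg_lt {d μ c lam : ℝ} (hμ : 0 < μ) (hlam : 0 < lam) :
    ∃ ε ∈ Ioo 0 lam, d * (exp ε + exp (-ε) - 2) < μ + c * ε := by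
  have hcont : ContinuousAt (fun ε => μ + c * ε - d * (exp ε + exp (-ε) - 2)) 0 := by fun_prop
  have hmargin : ∀ᶠ ε in 𝓝 0, 0 < μ + c * ε - d * (exp ε + exp (-ε) - 2) :=
    hcont.eventually (eventually_gt_nhds (by norm_num [hμ]))
  have hsmall : ∀ᶠ ε in 𝓝[>] 0, 0 < μ + c * ε - d * (exp ε + exp (-ε) - 2) ∧ ε < lam :=
    (hmargin.and (eventually_lt_nhds hlam)).filter_mono nhdsWithin_le_nhds
  obtain ⟨ε, ⟨hpos, hεlam⟩, hε⟩ := (hsmall.and self_mem_nhdsWithin).exists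
  exact ⟨ε, ⟨hε, hεlam⟩, by linarith⟩

noncomputable def lowerS (S₀ M ε ξ : ℝ) : ℝ := max (S₀ * (1 - M * exp (ε * ξ))) 0

/-- The travelling-wave equation for the susceptible class, with the infected profile replaced by
its upper solution `e^{λξ}`. -/
def LowerSolutionIneq (c d Λ μ β lam : ℝ) (f S : ℝ → ℝ) (ξ : ℝ) : Prop :=
  c * deriv S ξ ≤ d * (S (ξ + 1) + S (ξ - 1) - 2 * S ξ) + Λ - μ * S ξ - β * S ξ * f (exp (lam * ξ))

section lowerS

variable {S₀ M ε ξ : ℝ}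

lemma mul_exp_ne_one_of_ne (hε : ε ≠ 0) (hξ : ξ ≠ (1 / ε) * log (1 / M)) :
    M * exp (ε * ξ) ≠ 1 := by
  refine fun h => hξ ?_
  have : ε * ξ = log (1 / M) := by
    rw [← log_exp (ε * ξ), eq_one_div_of_mul_eq_one_right h]
  field_simp
  linarith

lemma lowerS_eventuallyEq_of_lt_one (hS₀ : 0 ≤ S₀) (h : M * exp (ε * ξ) < 1) :
    lowerS S₀ M ε =ᶠ[𝓝 ξ] fun η => S₀ * (1 - M * exp (ε * η)) := by
  have hcont : ContinuousAt (fun η => M * exp (ε * η)) ξ := by fun_prop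
  filter_upwards [hcont.eventually (eventually_lt_nhds h)] with η hη
  exact max_eq_left (mul_nonneg hS₀ (by linarith))

lemma lowerS_eventuallyEq_of_one_lt (hS₀ : 0 ≤ S₀) (h : 1 < M * exp (ε * ξ)) :
    lowerS S₀ M ε =ᶠ[𝓝 ξ] fun _ => 0 := by
  have hcont : ContinuousAt (fun η => M * exp (ε * η)) ξ := by fun_prop
  filter_upwards [hcont.eventually (eventually_gt_nhds h)] with η hη
  exact max_eq_right (mul_nonpos_of_nonneg_of_nonpos hS₀ (by linarith))

lemma hasDerivAt_lowerS_of_lt_one (hS₀ : 0 ≤ S₀) (h : M * exp (ε * ξ) < 1) :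
    HasDerivAt (lowerS S₀ M ε) (-(S₀ * M * ε * exp (ε * ξ))) ξ := by
  have hlin : HasDerivAt (fun η => ε * η) ε ξ := by simpa using (hasDerivAt_id ξ).const_mul ε
  refine ((((hlin.exp).const_mul M).const_sub 1).const_mul S₀).congr_of_eventuallyEq
    (lowerS_eventuallyEq_of_lt_one hS₀ h) |>.congr_deriv ?_
  ring

lemma hasDerivAt_lowerS_of_one_lt (hS₀ : 0 ≤ S₀) (h : 1 < M * exp (ε * ξ)) :
    HasDerivAt (lowerS S₀ M ε) 0 ξ :=
  (hasDerivAt_const ξ 0).congr_of_eventuallyEq (lowerS_eventuallyEq_of_one_lt hS₀ h)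

end lowerS

section LowerSolutionIneq

variable {c d Λ μ β lam k M ε ξ : ℝ} {f : ℝ → ℝ}

lemma lowerSolutionIneq_lowerS_of_lt_one (hd : 0 ≤ d) (hΛ : 0 ≤ Λ) (hμ : 0 < μ) (hβ : 0 ≤ β)
    (hk : 0 ≤ k) (hf_nonneg : ∀ I, 0 < I → 0 ≤ f I) (hf_le : ∀ I, 0 < I → f I ≤ k * I)
    (hε : 0 < ε) (hεlam : ε ≤ lam) (hM : 1 ≤ M)
    (hMk : β * k ≤ M * (μ + c * ε - d * (exp ε + exp (-ε) - 2)))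
    (h : M * exp (ε * ξ) < 1) : LowerSolutionIneq c d Λ μ β lam f (lowerS (Λ / μ) M ε) ξ := by
  set S₀ := Λ / μ
  set E := exp (ε * ξ) with hE
  have hS₀ : 0 ≤ S₀ := div_nonneg hΛ hμ.le
  have hμS₀ : μ * S₀ = Λ := mul_div_cancel₀ Λ hμ.ne'
  have hξ : ξ < 0 := by
    have : ε * ξ < 0 := exp_lt_one_iff.mp (by nlinarith [exp_pos (ε * ξ)])
    exact neg_of_mul_neg_right this hε.le
  have hS : lowerS S₀ M ε ξ = S₀ * (1 - M * E) := (lowerS_eventuallyEq_of_lt_one hS₀ h).eq_of_nhds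
  have hI : exp (lam * ξ) ≤ E := exp_le_exp.mpr (by nlinarith)
  have hinfect : β * (S₀ * (1 - M * E)) * f (exp (lam * ξ))
      ≤ S₀ * E * (M * (μ + c * ε - d * (exp ε + exp (-ε) - 2))) :=
    calc β * (S₀ * (1 - M * E)) * f (exp (lam * ξ))
        ≤ β * S₀ * f (exp (lam * ξ)) := by
          gcongr
          · exact hf_nonneg _ (exp_pos _)
          · exact mul_le_of_le_one_right hS₀ (sub_le_self _ (by positivity))
      _ ≤ β * S₀ * (k * E) := by
          gcongr
          exact (hf_le _ (exp_pos _)).trans (by gcongr)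
      _ = S₀ * E * (β * k) := by ring
      _ ≤ _ := by gcongr
  have hnext : S₀ * (1 - M * E * exp ε) ≤ lowerS S₀ M ε (ξ + 1) :=
    calc S₀ * (1 - M * E * exp ε) = S₀ * (1 - M * exp (ε * (ξ + 1))) := by
          rw [mul_add_one, exp_add]; ring
      _ ≤ _ := le_max_left _ _
  have hprev : S₀ * (1 - M * E * exp (-ε)) ≤ lowerS S₀ M ε (ξ - 1) :=
    calc S₀ * (1 - M * E * exp (-ε)) = S₀ * (1 - M * exp (ε * (ξ - 1))) := by
          rw [mul_sub_one, sub_eq_add_neg (ε * ξ), exp_add]; ring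
      _ ≤ _ := le_max_left _ _
  unfold LowerSolutionIneq
  rw [(hasDerivAt_lowerS_of_lt_one hS₀ h).deriv, hS, ← hE]
  nlinarith [mul_le_mul_of_nonneg_left hnext hd, mul_le_mul_of_nonneg_left hprev hd]

lemma lowerSolutionIneq_lowerS_of_one_lt {S₀ : ℝ} (hd : 0 ≤ d) (hΛ : 0 ≤ Λ) (hS₀ : 0 ≤ S₀)
    (h : 1 < M * exp (ε * ξ)) : LowerSolutionIneq c d Λ μ β lam f (lowerS S₀ M ε) ξ := by
  unfold LowerSolutionIneq
  rw [(hasDerivAt_lowerS_of_one_lt hS₀ h).deriv, (lowerS_eventuallyEq_of_one_lt hS₀ h).eq_of_nhds]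
  have hnext : 0 ≤ lowerS S₀ M ε (ξ + 1) := le_max_right _ _
  have hprev : 0 ≤ lowerS S₀ M ε (ξ - 1) := le_max_right _ _
  nlinarith [mul_nonneg hd (add_nonneg hnext hprev)]

lemma lowerSolutionIneq_lowerS (hd : 0 ≤ d) (hΛ : 0 ≤ Λ) (hμ : 0 < μ) (hβ : 0 ≤ β)
    (hk : 0 ≤ k) (hf_nonneg : ∀ I, 0 < I → 0 ≤ f I) (hf_le : ∀ I, 0 < I → f I ≤ k * I)
    (hε : 0 < ε) (hεlam : ε ≤ lam) (hM : 1 ≤ M)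
    (hD : d * (exp ε + exp (-ε) - 2) < μ + c * ε)
    (hMk : β * k / (μ + c * ε - d * (exp ε + exp (-ε) - 2)) ≤ M)
    (hξ : ξ ≠ (1 / ε) * log (1 / M)) :
    LowerSolutionIneq c d Λ μ β lam f (lowerS (Λ / μ) M ε) ξ := by
  rcases (mul_exp_ne_one_of_ne hε.ne' hξ).lt_or_gt with h | h
  · rw [div_le_iff₀ (by linarith)] at hMk
    exact lowerSolutionIneq_lowerS_of_lt_one hd hΛ hμ hβ hk hf_nonneg hf_le hε hεlam hM hMk h
  · exact lowerSolutionIneq_lowerS_of_one_lt hd hΛ (div_nonneg hΛ hμ.le) h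

end LowerSolutionIneq

theorem lower_solution_S_general
    (d₁ Λ β μ₁ : ℝ) (hd₁ : 0 < d₁) (hΛ : 0 < Λ)
    (hβ : 0 < β) (hμ₁ : 0 < μ₁)
    (f : ℝ → ℝ) (hf0 : f 0 = 0) (hfC1 : ContDiff ℝ 1 f)
    (hf' : ∀ I : ℝ, 0 ≤ I → 0 < deriv f I)
    (hfratio : ∀ I J : ℝ, 0 < I → I ≤ J → f J / J ≤ f I / I)
    (c : ℝ)
    (lam₁ : ℝ) (hlam₁pos : 0 < lam₁) :
    (∃ ε₁ M₁ : ℝ, 0 < ε₁ ∧ ε₁ < lam₁ ∧ 1 < M₁ ∧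
      (∀ ξ : ℝ, ξ ≠ (1 / ε₁) * Real.log (1 / M₁) →
        c * deriv (fun η : ℝ => max ((Λ / μ₁) * (1 - M₁ * Real.exp (ε₁ * η))) 0) ξ ≤
          d₁ * (max ((Λ / μ₁) * (1 - M₁ * Real.exp (ε₁ * (ξ + 1)))) 0
              + max ((Λ / μ₁) * (1 - M₁ * Real.exp (ε₁ * (ξ - 1)))) 0
              - 2 * max ((Λ / μ₁) * (1 - M₁ * Real.exp (ε₁ * ξ))) 0)
            + Λ - μ₁ * max ((Λ / μ₁) * (1 - M₁ * Real.exp (ε₁ * ξ))) 0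
            - β * max ((Λ / μ₁) * (1 - M₁ * Real.exp (ε₁ * ξ))) 0
              * f (Real.exp (lam₁ * ξ)))) ∧
    (∀ ε₁ M₁ : ℝ, 0 < ε₁ → ε₁ < lam₁ →
      d₁ * (Real.exp ε₁ + Real.exp (-ε₁) - 2) < μ₁ + c * ε₁ →
      1 < M₁ →
      β * deriv f 0 / (μ₁ + c * ε₁ - d₁ * (Real.exp ε₁ + Real.exp (-ε₁) - 2)) ≤ M₁ →
      (∀ ξ : ℝ, ξ ≠ (1 / ε₁) * Real.log (1 / M₁) →
        c * deriv (fun η : ℝ => max ((Λ / μ₁) * (1 - M₁ * Real.exp (ε₁ * η))) 0) ξ ≤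
          d₁ * (max ((Λ / μ₁) * (1 - M₁ * Real.exp (ε₁ * (ξ + 1)))) 0
              + max ((Λ / μ₁) * (1 - M₁ * Real.exp (ε₁ * (ξ - 1)))) 0
              - 2 * max ((Λ / μ₁) * (1 - M₁ * Real.exp (ε₁ * ξ))) 0)
            + Λ - μ₁ * max ((Λ / μ₁) * (1 - M₁ * Real.exp (ε₁ * ξ))) 0
            - β * max ((Λ / μ₁) * (1 - M₁ * Real.exp (ε₁ * ξ))) 0
              * f (Real.exp (lam₁ * ξ)))) := by
  have hf : Differentiable ℝ f := hfC1.differentiable one_ne_zero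
  have hf_nonneg (I : ℝ) (hI : 0 < I) : 0 ≤ f I :=
    nonneg_of_map_zero_of_deriv_nonneg hf hf0 (fun x hx => (hf' x hx.le).le) hI.le
  have hf_le (I : ℝ) (hI : 0 < I) : f I ≤ deriv f 0 * I :=
    le_mul_of_hasDerivAt_zero_of_antitoneOn_div (hf 0).hasDerivAt hf0
      (fun x hx y _ hxy => hfratio x y hx hxy) hI
  have hlower (ε₁ M₁ : ℝ) (hε : 0 < ε₁) (hεlam : ε₁ < lam₁)
      (hD : d₁ * (exp ε₁ + exp (-ε₁) - 2) < μ₁ + c * ε₁) (hM : 1 < M₁)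
      (hMk : β * deriv f 0 / (μ₁ + c * ε₁ - d₁ * (exp ε₁ + exp (-ε₁) - 2)) ≤ M₁) (ξ : ℝ)
      (hξ : ξ ≠ (1 / ε₁) * log (1 / M₁)) :
      LowerSolutionIneq c d₁ Λ μ₁ β lam₁ f (lowerS (Λ / μ₁) M₁ ε₁) ξ :=
    lowerSolutionIneq_lowerS hd₁.le hΛ.le hμ₁ hβ.le (hf' 0 le_rfl).le hf_nonneg hf_le hε
      hεlam.le hM.le hD hMk hξ
  refine ⟨?_, hlower⟩
  obtain ⟨ε₁, ⟨hε, hεlam⟩, hD⟩ :=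
    exists_mem_Ioo_mul_exp_add_exp_neg_lt (d := d₁) (c := c) hμ₁ hlam₁pos
  have hM : 1 < max 2 (β * deriv f 0 / (μ₁ + c * ε₁ - d₁ * (exp ε₁ + exp (-ε₁) - 2))) :=
    one_lt_two.trans_le (le_max_left _ _)
  exact ⟨ε₁, _, hε, hεlam, hM, hlower ε₁ _ hε hεlam hD hM (le_max_right _ _)⟩

/-- **Lower solution for the susceptible component** (Lemma 2.3).
Assume `ℛ₀ > 1`, `c > c*` and let `λ₁` be the smaller positive root of `Δ(·, c) = 0`.
Then there exist `ε₁ ∈ (0, λ₁)` and `M₁ > 1` such that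
`S⁻(ξ) = max{S₀(1 − M₁e^{ε₁ξ}), 0}` satisfies the lower-solution differential
inequality away from `𝔛₁ = (1/ε₁)ln(1/M₁)`; in particular this holds whenever
`ε₁ ∈ (0, λ₁)` satisfies `μ₁ + cε₁ > d₁(e^{ε₁} + e^{−ε₁} − 2)` and `M₁ > 1` satisfies
`M₁ ≥ βf'(0)/(μ₁ + cε₁ − d₁(e^{ε₁} + e^{−ε₁} − 2))`. -/
theorem lower_solution_S
    (d₁ d₂ Λ β μ₁ μ₂ : ℝ) (hd₁ : 0 < d₁) (hd₂ : 0 < d₂) (hΛ : 0 < Λ)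
    (hβ : 0 < β) (hμ₁ : 0 < μ₁) (hμ₂ : 0 < μ₂)
    (f : ℝ → ℝ) (hf0 : f 0 = 0) (hfC1 : ContDiff ℝ 1 f)
    (hf' : ∀ I : ℝ, 0 ≤ I → 0 < deriv f I)
    (hfratio : ∀ I J : ℝ, 0 < I → I ≤ J → f J / J ≤ f I / I)
    (hR₀ : 1 < β * (Λ / μ₁) * deriv f 0 / μ₂)
    (lamstar cstar : ℝ) (hlamstar : 0 < lamstar) (hcstar : 0 < cstar)
    (hΔstar : d₂ * (Real.exp lamstar + Real.exp (-lamstar) - 2)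
      - cstar * lamstar + β * (Λ / μ₁) * deriv f 0 - μ₂ = 0)
    (hdΔstar : d₂ * (Real.exp lamstar - Real.exp (-lamstar)) - cstar = 0)
    (c : ℝ) (hc : cstar < c)
    (lam₁ : ℝ) (hlam₁pos : 0 < lam₁) (hlam₁lt : lam₁ < lamstar)
    (hlam₁root : d₂ * (Real.exp lam₁ + Real.exp (-lam₁) - 2)
      - c * lam₁ + β * (Λ / μ₁) * deriv f 0 - μ₂ = 0) :
    (∃ ε₁ M₁ : ℝ, 0 < ε₁ ∧ ε₁ < lam₁ ∧ 1 < M₁ ∧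
      (∀ ξ : ℝ, ξ ≠ (1 / ε₁) * Real.log (1 / M₁) →
        c * deriv (fun η : ℝ => max ((Λ / μ₁) * (1 - M₁ * Real.exp (ε₁ * η))) 0) ξ ≤
          d₁ * (max ((Λ / μ₁) * (1 - M₁ * Real.exp (ε₁ * (ξ + 1)))) 0
              + max ((Λ / μ₁) * (1 - M₁ * Real.exp (ε₁ * (ξ - 1)))) 0
              - 2 * max ((Λ / μ₁) * (1 - M₁ * Real.exp (ε₁ * ξ))) 0)
            + Λ - μ₁ * max ((Λ / μ₁) * (1 - M₁ * Real.exp (ε₁ * ξ))) 0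
            - β * max ((Λ / μ₁) * (1 - M₁ * Real.exp (ε₁ * ξ))) 0
              * f (Real.exp (lam₁ * ξ)))) ∧
    (∀ ε₁ M₁ : ℝ, 0 < ε₁ → ε₁ < lam₁ →
      d₁ * (Real.exp ε₁ + Real.exp (-ε₁) - 2) < μ₁ + c * ε₁ →
      1 < M₁ →
      β * deriv f 0 / (μ₁ + c * ε₁ - d₁ * (Real.exp ε₁ + Real.exp (-ε₁) - 2)) ≤ M₁ →
      (∀ ξ : ℝ, ξ ≠ (1 / ε₁) * Real.log (1 / M₁) →
        c * deriv (fun η : ℝ => max ((Λ / μ₁) * (1 - M₁ * Real.exp (ε₁ * η))) 0) ξ ≤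
          d₁ * (max ((Λ / μ₁) * (1 - M₁ * Real.exp (ε₁ * (ξ + 1)))) 0
              + max ((Λ / μ₁) * (1 - M₁ * Real.exp (ε₁ * (ξ - 1)))) 0
              - 2 * max ((Λ / μ₁) * (1 - M₁ * Real.exp (ε₁ * ξ))) 0)
            + Λ - μ₁ * max ((Λ / μ₁) * (1 - M₁ * Real.exp (ε₁ * ξ))) 0
            - β * max ((Λ / μ₁) * (1 - M₁ * Real.exp (ε₁ * ξ))) 0
              * f (Real.exp (lam₁ * ξ)))) :=
  lower_solution_S_general d₁ Λ β μ₁ hd₁ hΛ hβ hμ₁ f hf0 hfC1 hf' hfratio c lam₁ hlam₁pos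
end

section
/- Let (S, I) be a traveling wave profile with speed c > 0 such that 0 ≤ S(ξ) ≤ S₀ and I(ξ) ≥ 0 for all ξ ∈ ℝ, and such that I(ξ) > 0 for all sufficiently negative ξ. Then 0 < S(ξ) < S₀ and I(ξ) > 0 for all ξ ∈ ℝ. -/
/-!
Every boundary value in the claim is a global extremum of `S` or `I`, where the derivative
vanishes, so the right-hand side of the corresponding wave equation must vanish there too.
At a zero of `I` this forces `I (ξ ± 1) = 0`; zeros therefore propagate to the left in steps
of `1` and would reach the region where `I > 0`. At `S ξ = 0` the right-hand side of the
`S`-equation is at least `Λ > 0`, and at `S ξ = S₀` it is at most `-β S₀ f (I ξ) < 0`.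
-/

lemma pos_of_map_zero_of_deriv_pos {f : ℝ → ℝ} (hf0 : f 0 = 0)
    (hf' : ∀ x, 0 ≤ x → 0 < deriv f x) {x : ℝ} (hx : 0 < x) : 0 < f x := by
  have hcont : ContinuousOn f (Set.Ici 0) := fun y hy =>
    (differentiableAt_of_deriv_ne_zero (hf' y hy).ne').continuousAt.continuousWithinAt
  have hmono : StrictMonoOn f (Set.Ici 0) :=
    strictMonoOn_of_deriv_pos (convex_Ici 0) hcont fun y hy => hf' y (interior_subset hy)
  simpa [hf0] using hmono Set.self_mem_Ici hx.le hx

lemma ne_zero_of_zeros_propagate_left {u : ℝ → ℝ}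
    (hstep : ∀ η, u η = 0 → u (η - 1) = 0) (hleft : ∃ ξ₀, ∀ ξ ≤ ξ₀, u ξ ≠ 0) (ξ : ℝ) :
    u ξ ≠ 0 := by
  obtain ⟨ξ₀, hξ₀⟩ := hleft
  intro hξ
  have hzero : ∀ n : ℕ, u (ξ - n) = 0 := by
    intro n
    induction n with
    | zero => simpa using hξ
    | succ n ih => simpa [sub_sub] using hstep _ ih
  obtain ⟨n, hn⟩ := exists_nat_ge (ξ - ξ₀)
  exact hξ₀ _ (by linarith) (hzero n)

section WaveEquations

variable {d₁ d₂ Λ β μ₁ μ₂ c : ℝ} {f S I : ℝ → ℝ} {ξ : ℝ}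

lemma infected_sub_one_eq_zero (hd₂ : 0 < d₂) (hf0 : f 0 = 0) (hInonneg : ∀ x, 0 ≤ I x)
    (hIeq : c * deriv I ξ =
      d₂ * (I (ξ + 1) + I (ξ - 1) - 2 * I ξ) + β * S ξ * f (I ξ) - μ₂ * I ξ)
    (hξ : I ξ = 0) : I (ξ - 1) = 0 := by
  have hderiv : deriv I ξ = 0 :=
    IsLocalMin.deriv_eq_zero (.of_forall fun x => by rw [hξ]; exact hInonneg x)
  rw [hderiv, hξ, hf0] at hIeq
  nlinarith [hInonneg (ξ + 1), hInonneg (ξ - 1)]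

lemma susceptible_pos (hd₁ : 0 ≤ d₁) (hΛ : 0 < Λ) (hSnonneg : ∀ x, 0 ≤ S x)
    (hSeq : c * deriv S ξ =
      d₁ * (S (ξ + 1) + S (ξ - 1) - 2 * S ξ) + Λ - μ₁ * S ξ - β * S ξ * f (I ξ)) :
    0 < S ξ := by
  refine (hSnonneg ξ).lt_of_ne' fun hξ => ?_
  have hderiv : deriv S ξ = 0 :=
    IsLocalMin.deriv_eq_zero (.of_forall fun x => by rw [hξ]; exact hSnonneg x)
  rw [hderiv, hξ] at hSeq
  have hdiff : 0 ≤ d₁ * (S (ξ + 1) + S (ξ - 1) - 2 * 0) := by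
    have := hSnonneg (ξ + 1); have := hSnonneg (ξ - 1)
    exact mul_nonneg hd₁ (by linarith)
  linarith

lemma susceptible_lt (hd₁ : 0 ≤ d₁) (hΛ : 0 < Λ) (hβ : 0 < β) (hμ₁ : 0 < μ₁)
    (hSle : ∀ x, S x ≤ Λ / μ₁) (hfI : 0 < f (I ξ))
    (hSeq : c * deriv S ξ =
      d₁ * (S (ξ + 1) + S (ξ - 1) - 2 * S ξ) + Λ - μ₁ * S ξ - β * S ξ * f (I ξ)) :
    S ξ < Λ / μ₁ := by
  refine (hSle ξ).lt_of_ne fun hξ => ?_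
  have hderiv : deriv S ξ = 0 :=
    IsLocalMax.deriv_eq_zero (.of_forall fun x => by rw [hξ]; exact hSle x)
  rw [hderiv, hξ, mul_div_cancel₀ Λ hμ₁.ne'] at hSeq
  have hdiff : d₁ * (S (ξ + 1) + S (ξ - 1) - 2 * (Λ / μ₁)) ≤ 0 := by
    have := hSle (ξ + 1); have := hSle (ξ - 1)
    exact mul_nonpos_of_nonneg_of_nonpos hd₁ (by linarith)
  have hreaction : 0 < β * (Λ / μ₁) * f (I ξ) := by positivity
  linarith

end WaveEquations

theorem traveling_wave_strict_bounds_general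
    (d₁ d₂ Λ β μ₁ μ₂ : ℝ) (hd₁ : 0 < d₁) (hd₂ : 0 < d₂) (hΛ : 0 < Λ)
    (hβ : 0 < β) (hμ₁ : 0 < μ₁)
    (f : ℝ → ℝ) (hf0 : f 0 = 0)
    (hf' : ∀ I : ℝ, 0 ≤ I → 0 < deriv f I)
    (c : ℝ)
    (S I : ℝ → ℝ)
    (hSeq : ∀ ξ : ℝ, c * deriv S ξ =
      d₁ * (S (ξ + 1) + S (ξ - 1) - 2 * S ξ) + Λ - μ₁ * S ξ - β * S ξ * f (I ξ))
    (hIeq : ∀ ξ : ℝ, c * deriv I ξ =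
      d₂ * (I (ξ + 1) + I (ξ - 1) - 2 * I ξ) + β * S ξ * f (I ξ) - μ₂ * I ξ)
    (hSbd : ∀ ξ : ℝ, 0 ≤ S ξ ∧ S ξ ≤ Λ / μ₁) (hInonneg : ∀ ξ : ℝ, 0 ≤ I ξ)
    (hIneg : ∃ ξ₀ : ℝ, ∀ ξ : ℝ, ξ ≤ ξ₀ → 0 < I ξ) :
    ∀ ξ : ℝ, 0 < S ξ ∧ S ξ < Λ / μ₁ ∧ 0 < I ξ := by
  have hIpos : ∀ ξ, 0 < I ξ := by
    obtain ⟨ξ₀, hξ₀⟩ := hIneg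
    refine fun ξ => (hInonneg ξ).lt_of_ne' (ne_zero_of_zeros_propagate_left ?_ ?_ ξ)
    · exact fun η => infected_sub_one_eq_zero hd₂ hf0 hInonneg (hIeq η)
    · exact ⟨ξ₀, fun ξ hξ => (hξ₀ ξ hξ).ne'⟩
  intro ξ
  refine ⟨susceptible_pos hd₁.le hΛ (fun x => (hSbd x).1) (hSeq ξ),
    susceptible_lt hd₁.le hΛ hβ hμ₁ (fun x => (hSbd x).2) ?_ (hSeq ξ), hIpos ξ⟩
  exact pos_of_map_zero_of_deriv_pos hf0 hf' (hIpos ξ)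

/-- **Strict positivity of traveling wave profiles** (Step 2 of the proof of
Theorem 3.1).  Let `(S, I)` be a traveling wave profile with speed `c > 0` such that
`0 ≤ S(ξ) ≤ S₀` and `I(ξ) ≥ 0` for all `ξ`, and `I(ξ) > 0` for all sufficiently
negative `ξ`.  Then `0 < S(ξ) < S₀` and `I(ξ) > 0` for all `ξ ∈ ℝ`. -/
theorem traveling_wave_strict_bounds
    (d₁ d₂ Λ β μ₁ μ₂ : ℝ) (hd₁ : 0 < d₁) (hd₂ : 0 < d₂) (hΛ : 0 < Λ)
    (hβ : 0 < β) (hμ₁ : 0 < μ₁) (hμ₂ : 0 < μ₂)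
    (f : ℝ → ℝ) (hf0 : f 0 = 0) (hfC1 : ContDiff ℝ 1 f)
    (hf' : ∀ I : ℝ, 0 ≤ I → 0 < deriv f I)
    (hfratio : ∀ I J : ℝ, 0 < I → I ≤ J → f J / J ≤ f I / I)
    (c : ℝ) (hc : 0 < c)
    (S I : ℝ → ℝ) (hS : ContDiff ℝ 1 S) (hI : ContDiff ℝ 1 I)
    (hSeq : ∀ ξ : ℝ, c * deriv S ξ =
      d₁ * (S (ξ + 1) + S (ξ - 1) - 2 * S ξ) + Λ - μ₁ * S ξ - β * S ξ * f (I ξ))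
    (hIeq : ∀ ξ : ℝ, c * deriv I ξ =
      d₂ * (I (ξ + 1) + I (ξ - 1) - 2 * I ξ) + β * S ξ * f (I ξ) - μ₂ * I ξ)
    (hSbd : ∀ ξ : ℝ, 0 ≤ S ξ ∧ S ξ ≤ Λ / μ₁) (hInonneg : ∀ ξ : ℝ, 0 ≤ I ξ)
    (hIneg : ∃ ξ₀ : ℝ, ∀ ξ : ℝ, ξ ≤ ξ₀ → 0 < I ξ) :
    ∀ ξ : ℝ, 0 < S ξ ∧ S ξ < Λ / μ₁ ∧ 0 < I ξ :=
  traveling_wave_strict_bounds_general d₁ d₂ Λ β μ₁ μ₂ hd₁ hd₂ hΛ hβ hμ₁ f hf0 hf' c S I hSeq hIeq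
    hSbd hInonneg hIneg
end

section
/- Let (S, I) be a traveling wave profile with speed c > 0 such that 0 < S(ξ) ≤ S₀ and I(ξ) > 0 for all ξ ∈ ℝ, and set ν := (2d₂ + μ₂)/c. Then for all ξ ∈ ℝ one has I(ξ−1)/I(ξ) < e^{ν} and I(ξ+1)/I(ξ) < 4·(c/d₂)⁴·e^{3ν}; consequently the function ξ ↦ I'(ξ)/I(ξ) is bounded on ℝ. -/
open Real Filter

open Topology

/-!
Dropping the nonnegative terms `d₂ I(ξ-1)` and `β S f(I)` from the equation for `I` leaves the
delayed differential inequality `κ I(ξ+1) ≤ I'(ξ) + ν I(ξ)` with `κ = d₂/c`. It makes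
`e^{νξ} I(ξ)` strictly increasing, which is the backward bound. Integrating the inequality over
`[ξ, ξ+h]` and using that monotonicity once more gives `κ h I(ξ+1) < e^{νh} I(ξ+h)`; two half
steps give the forward bound, and `h = 1` gives `κ < e^ν`, which relaxes it to the stated constant.
Once both neighbour ratios are bounded, the equation bounds `I'/I` from above, while the
inequality bounds it from below by `-ν`.
-/

lemma hasDerivAt_exp_mul_mul {u : ℝ → ℝ} {ν : ℝ} (hu : Differentiable ℝ u) (t : ℝ) :
    HasDerivAt (fun s => exp (ν * s) * u s) (exp (ν * t) * (deriv u t + ν * u t)) t :=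
  (((hasDerivAt_id' t).const_mul ν).exp.fun_mul (hu t).hasDerivAt).congr_deriv (by ring)

namespace DelayedInequality

variable {u : ℝ → ℝ} {κ ν : ℝ}

lemma strictMono_exp_mul_mul (hu : Differentiable ℝ u) (hpos : ∀ t, 0 < u t) (hκ : 0 < κ)
    (hineq : ∀ t, κ * u (t + 1) ≤ deriv u t + ν * u t) :
    StrictMono fun t => exp (ν * t) * u t :=
  strictMono_of_hasDerivAt_pos (hasDerivAt_exp_mul_mul hu) fun t =>
    mul_pos (exp_pos _) ((mul_pos hκ (hpos _)).trans_le (hineq t))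

lemma exp_mul_mul_add_le (hu : Differentiable ℝ u) (hpos : ∀ t, 0 < u t) (hκ : 0 < κ)
    (hineq : ∀ t, κ * u (t + 1) ≤ deriv u t + ν * u t) (a : ℝ) {t s : ℝ} (hts : t ≤ s) :
    exp (ν * t) * u (t + a) ≤ exp (ν * s) * u (s + a) := by
  have h := (strictMono_exp_mul_mul hu hpos hκ hineq).monotone (by linarith : t + a ≤ s + a)
  simp only [mul_add, exp_add] at h
  rw [mul_right_comm, mul_right_comm (exp (ν * s))] at h
  exact le_of_mul_le_mul_right h (exp_pos _)

lemma neg_lt_deriv_div (hpos : ∀ t, 0 < u t) (hκ : 0 < κ)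
    (hineq : ∀ t, κ * u (t + 1) ≤ deriv u t + ν * u t) (t : ℝ) :
    -ν < deriv u t / u t := by
  rw [lt_div_iff₀ (hpos t)]
  linarith [mul_pos hκ (hpos (t + 1)), hineq t]

lemma sub_one_lt_exp_mul (hu : Differentiable ℝ u) (hpos : ∀ t, 0 < u t) (hκ : 0 < κ)
    (hineq : ∀ t, κ * u (t + 1) ≤ deriv u t + ν * u t) (t : ℝ) :
    u (t - 1) < exp ν * u t := by
  have h := strictMono_exp_mul_mul hu hpos hκ hineq (sub_one_lt t)
  dsimp only at h
  rw [show ν * t = ν * (t - 1) + ν by ring, exp_add, mul_assoc] at h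
  exact lt_of_mul_lt_mul_left h (exp_pos _).le

lemma mul_mul_add_one_lt (hu : Differentiable ℝ u) (hpos : ∀ t, 0 < u t) (hκ : 0 < κ)
    (hineq : ∀ t, κ * u (t + 1) ≤ deriv u t + ν * u t) (t : ℝ) {h : ℝ} (hh : 0 < h) :
    κ * h * u (t + 1) < exp (ν * h) * u (t + h) := by
  set J : ℝ → ℝ := fun s => exp (ν * s) * u s
  have hJ : ∀ s, HasDerivAt J (exp (ν * s) * (deriv u s + ν * u s)) s :=
    hasDerivAt_exp_mul_mul hu
  have hderiv_ge : ∀ s ∈ interior (Set.Ici t), κ * (exp (ν * t) * u (t + 1)) ≤ deriv J s := by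
    intro s hs
    rw [interior_Ici] at hs
    rw [(hJ s).deriv]
    calc κ * (exp (ν * t) * u (t + 1)) ≤ κ * (exp (ν * s) * u (s + 1)) :=
          mul_le_mul_of_nonneg_left (exp_mul_mul_add_le hu hpos hκ hineq 1 hs.le) hκ.le
      _ = exp (ν * s) * (κ * u (s + 1)) := by ring
      _ ≤ exp (ν * s) * (deriv u s + ν * u s) := by gcongr; exact hineq s
  have hmvt := (convex_Ici t).mul_sub_le_image_sub_of_le_deriv
    (fun s _ => (hJ s).continuousAt.continuousWithinAt)
    (fun s _ => (hJ s).differentiableAt.differentiableWithinAt) hderiv_ge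
    t Set.self_mem_Ici (t + h) (Set.mem_Ici.2 (by linarith)) (by linarith)
  have hJt : 0 < J t := mul_pos (exp_pos _) (hpos t)
  have hsplit : J (t + h) = exp (ν * t) * (exp (ν * h) * u (t + h)) := by
    simp only [J, mul_add, exp_add, mul_assoc]
  rw [add_sub_cancel_left, hsplit] at hmvt
  refine lt_of_mul_lt_mul_left ?_ (exp_pos (ν * t)).le
  linarith

lemma lt_exp (hu : Differentiable ℝ u) (hpos : ∀ t, 0 < u t) (hκ : 0 < κ)
    (hineq : ∀ t, κ * u (t + 1) ≤ deriv u t + ν * u t) : κ < exp ν := by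
  have h := mul_mul_add_one_lt hu hpos hκ hineq 0 one_pos
  rw [mul_one, mul_one] at h
  exact lt_of_mul_lt_mul_right h (hpos _).le

lemma sq_mul_add_one_lt (hu : Differentiable ℝ u) (hpos : ∀ t, 0 < u t) (hκ : 0 < κ)
    (hineq : ∀ t, κ * u (t + 1) ≤ deriv u t + ν * u t) (t : ℝ) :
    (κ / 2) ^ 2 * u (t + 1) < exp ν * u t := by
  have h₁ := mul_mul_add_one_lt hu hpos hκ hineq t (h := 1 / 2) (by norm_num)
  have h₂ := mul_mul_add_one_lt hu hpos hκ hineq (t - 1 / 2) (h := 1 / 2) (by norm_num)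
  rw [show t - 1 / 2 + 1 = t + 1 / 2 by ring, sub_add_cancel] at h₂
  have hexp : exp ν = exp (ν * (1 / 2)) * exp (ν * (1 / 2)) := by rw [← exp_add]; ring_nf
  calc (κ / 2) ^ 2 * u (t + 1) = κ / 2 * (κ * (1 / 2) * u (t + 1)) := by ring
    _ < κ / 2 * (exp (ν * (1 / 2)) * u (t + 1 / 2)) := by gcongr
    _ = exp (ν * (1 / 2)) * (κ * (1 / 2) * u (t + 1 / 2)) := by ring
    _ < exp (ν * (1 / 2)) * (exp (ν * (1 / 2)) * u t) := by gcongr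
    _ = exp ν * u t := by rw [hexp, mul_assoc]

lemma add_one_lt (hu : Differentiable ℝ u) (hpos : ∀ t, 0 < u t) (hκ : 0 < κ)
    (hineq : ∀ t, κ * u (t + 1) ≤ deriv u t + ν * u t) (t : ℝ) :
    u (t + 1) < 4 * κ⁻¹ ^ 4 * exp (3 * ν) * u t := by
  have hsq := sq_mul_add_one_lt hu hpos hκ hineq t
  have hκν : 1 ≤ (exp ν * κ⁻¹) ^ 2 :=
    one_le_pow₀ ((one_le_div hκ).2 (lt_exp hu hpos hκ hineq).le)
  have hexp : exp (3 * ν) = exp ν * exp ν ^ 2 := by rw [← exp_nat_mul, ← exp_add]; ring_nf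
  calc u (t + 1) = 4 * κ⁻¹ ^ 2 * ((κ / 2) ^ 2 * u (t + 1)) := by field_simp; ring
    _ < 4 * κ⁻¹ ^ 2 * (exp ν * u t) := by gcongr
    _ ≤ 4 * κ⁻¹ ^ 2 * (exp ν * u t) * (exp ν * κ⁻¹) ^ 2 :=
        le_mul_of_one_le_right (by have := hpos t; positivity) hκν
    _ = 4 * κ⁻¹ ^ 4 * exp (3 * ν) * u t := by rw [hexp]; ring

end DelayedInequality

lemma nonneg_of_map_zero_of_deriv_pos {f : ℝ → ℝ} (hf0 : f 0 = 0)
    (hf' : ∀ x, 0 ≤ x → 0 < deriv f x) {x : ℝ} (hx : 0 ≤ x) : 0 ≤ f x := by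
  have hmono : StrictMonoOn f (Set.Ici 0) :=
    strictMonoOn_of_deriv_pos (convex_Ici 0)
      (fun y hy =>
        (differentiableAt_of_deriv_ne_zero (hf' y hy).ne').continuousAt.continuousWithinAt)
      (fun y hy => hf' y (interior_subset hy))
  rw [← hf0]
  exact hmono.monotoneOn Set.self_mem_Ici hx hx

lemma le_deriv_zero_mul_of_antitoneOn_div {f : ℝ → ℝ} (hf0 : f 0 = 0)
    (hf : DifferentiableAt ℝ f 0) (hanti : AntitoneOn (fun x => f x / x) (Set.Ioi 0))
    {x : ℝ} (hx : 0 < x) :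
    f x ≤ deriv f 0 * x := by
  have hslope : Tendsto (fun t => f t / t) (𝓝[>] 0) (𝓝 (deriv f 0)) := by
    refine ((hasDerivAt_iff_tendsto_slope.1 hf.hasDerivAt).mono_left
      (nhdsWithin_mono 0 fun t ht => ne_of_gt ht)).congr' ?_
    filter_upwards [self_mem_nhdsWithin] with t ht
    simp [slope_def_field, hf0]
  have hle : f x / x ≤ deriv f 0 :=
    ge_of_tendsto hslope <| by
      filter_upwards [Ioc_mem_nhdsGT hx] with t ht
      exact hanti ht.1 hx ht.2
  rwa [div_le_iff₀ hx] at hle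

namespace LatticeEquation

variable {I g : ℝ → ℝ} {c d μ : ℝ}

lemma div_mul_add_one_le_deriv_add (hc : 0 < c) (hd : 0 ≤ d) (hIpos : ∀ ξ, 0 < I ξ)
    (hg : ∀ ξ, 0 ≤ g ξ)
    (hIeq : ∀ ξ, c * deriv I ξ = d * (I (ξ + 1) + I (ξ - 1) - 2 * I ξ) + g ξ - μ * I ξ)
    (ξ : ℝ) : d / c * I (ξ + 1) ≤ deriv I ξ + (2 * d + μ) / c * I ξ := by
  rw [← mul_le_mul_iff_of_pos_left hc, mul_add, ← mul_assoc, ← mul_assoc,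
    mul_div_cancel₀ _ hc.ne', mul_div_cancel₀ _ hc.ne', hIeq]
  nlinarith [mul_nonneg hd (hIpos (ξ - 1)).le, hg ξ]

lemma deriv_div_le_of_shift_le (hc : 0 < c) (hd : 0 ≤ d) (hIpos : ∀ ξ, 0 < I ξ)
    (hIeq : ∀ ξ, c * deriv I ξ = d * (I (ξ + 1) + I (ξ - 1) - 2 * I ξ) + g ξ - μ * I ξ)
    {A B K : ℝ} (hA : ∀ ξ, I (ξ + 1) ≤ A * I ξ) (hB : ∀ ξ, I (ξ - 1) ≤ B * I ξ)
    (hK : ∀ ξ, g ξ ≤ K * I ξ) (ξ : ℝ) :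
    deriv I ξ / I ξ ≤ (d * (A + B) + K - (2 * d + μ)) / c := by
  rw [div_le_div_iff₀ (hIpos ξ) hc, mul_comm _ c, hIeq]
  nlinarith [mul_le_mul_of_nonneg_left (hA ξ) hd, mul_le_mul_of_nonneg_left (hB ξ) hd, hK ξ]

end LatticeEquation

theorem harnack_estimates_I_general
    (d₂ Λ β μ₁ μ₂ : ℝ) (hd₂ : 0 < d₂) (hβ : 0 < β)
    (f : ℝ → ℝ) (hf0 : f 0 = 0)
    (hf' : ∀ I : ℝ, 0 ≤ I → 0 < deriv f I)
    (hfratio : ∀ I J : ℝ, 0 < I → I ≤ J → f J / J ≤ f I / I)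
    (c : ℝ) (hc : 0 < c)
    (S I : ℝ → ℝ) (hI : ContDiff ℝ 1 I)
    (hIeq : ∀ ξ : ℝ, c * deriv I ξ =
      d₂ * (I (ξ + 1) + I (ξ - 1) - 2 * I ξ) + β * S ξ * f (I ξ) - μ₂ * I ξ)
    (hSbd : ∀ ξ : ℝ, 0 < S ξ ∧ S ξ ≤ Λ / μ₁) (hIpos : ∀ ξ : ℝ, 0 < I ξ) :
    (∀ ξ : ℝ, I (ξ - 1) / I ξ < Real.exp ((2 * d₂ + μ₂) / c)) ∧
    (∀ ξ : ℝ, I (ξ + 1) / I ξ <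
      4 * (c / d₂) ^ 4 * Real.exp (3 * ((2 * d₂ + μ₂) / c))) ∧
    ∃ C : ℝ, ∀ ξ : ℝ, |deriv I ξ / I ξ| ≤ C := by
  have hκ : 0 < d₂ / c := div_pos hd₂ hc
  have hIdiff : Differentiable ℝ I := hI.differentiable one_ne_zero
  have hineq : ∀ ξ, d₂ / c * I (ξ + 1) ≤ deriv I ξ + (2 * d₂ + μ₂) / c * I ξ :=
    LatticeEquation.div_mul_add_one_le_deriv_add hc hd₂.le hIpos (fun ξ => mul_nonneg
      (mul_pos hβ (hSbd ξ).1).le (nonneg_of_map_zero_of_deriv_pos hf0 hf' (hIpos ξ).le)) hIeq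
  have hback := DelayedInequality.sub_one_lt_exp_mul hIdiff hIpos hκ hineq
  have hfwd : ∀ ξ, I (ξ + 1) < 4 * (c / d₂) ^ 4 * exp (3 * ((2 * d₂ + μ₂) / c)) * I ξ := by
    simpa only [inv_div] using DelayedInequality.add_one_lt hIdiff hIpos hκ hineq
  have hf'0 : 0 < deriv f 0 := hf' 0 le_rfl
  have hflin : ∀ {x}, 0 < x → f x ≤ deriv f 0 * x :=
    le_deriv_zero_mul_of_antitoneOn_div hf0 (differentiableAt_of_deriv_ne_zero hf'0.ne')
      fun x hx y _ hxy => hfratio x y hx hxy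
  have hinfection : ∀ ξ, β * S ξ * f (I ξ) ≤ β * (Λ / μ₁) * deriv f 0 * I ξ := fun ξ =>
    calc β * S ξ * f (I ξ) ≤ β * S ξ * (deriv f 0 * I ξ) :=
          mul_le_mul_of_nonneg_left (hflin (hIpos ξ)) (mul_pos hβ (hSbd ξ).1).le
      _ ≤ β * (Λ / μ₁) * (deriv f 0 * I ξ) := by
          have := hIpos ξ
          gcongr
          exact (hSbd ξ).2
      _ = β * (Λ / μ₁) * deriv f 0 * I ξ := by ring
  refine ⟨fun ξ => (div_lt_iff₀ (hIpos ξ)).2 (hback ξ),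
    fun ξ => (div_lt_iff₀ (hIpos ξ)).2 (hfwd ξ), _, fun ξ => abs_le_max_abs_abs
      (DelayedInequality.neg_lt_deriv_div hIpos hκ hineq ξ).le
      (LatticeEquation.deriv_div_le_of_shift_le hc hd₂.le hIpos hIeq (fun ξ => (hfwd ξ).le)
        (fun ξ => (hback ξ).le) hinfection ξ)⟩

/-- **Harnack-type estimates for the infected component** (Lemma 3.2 / Appendix A).
Let `(S, I)` be a traveling wave profile with speed `c > 0` satisfying
`0 < S(ξ) ≤ S₀` and `I(ξ) > 0` for all `ξ`, and set `ν = (2d₂ + μ₂)/c`.  Then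
`I(ξ−1)/I(ξ) < e^{ν}`, `I(ξ+1)/I(ξ) < 4(c/d₂)⁴e^{3ν}` for all `ξ`, and the function
`I'/I` is bounded on `ℝ`. -/
theorem harnack_estimates_I
    (d₁ d₂ Λ β μ₁ μ₂ : ℝ) (hd₁ : 0 < d₁) (hd₂ : 0 < d₂) (hΛ : 0 < Λ)
    (hβ : 0 < β) (hμ₁ : 0 < μ₁) (hμ₂ : 0 < μ₂)
    (f : ℝ → ℝ) (hf0 : f 0 = 0) (hfC1 : ContDiff ℝ 1 f)
    (hf' : ∀ I : ℝ, 0 ≤ I → 0 < deriv f I)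
    (hfratio : ∀ I J : ℝ, 0 < I → I ≤ J → f J / J ≤ f I / I)
    (c : ℝ) (hc : 0 < c)
    (S I : ℝ → ℝ) (hS : ContDiff ℝ 1 S) (hI : ContDiff ℝ 1 I)
    (hSeq : ∀ ξ : ℝ, c * deriv S ξ =
      d₁ * (S (ξ + 1) + S (ξ - 1) - 2 * S ξ) + Λ - μ₁ * S ξ - β * S ξ * f (I ξ))
    (hIeq : ∀ ξ : ℝ, c * deriv I ξ =
      d₂ * (I (ξ + 1) + I (ξ - 1) - 2 * I ξ) + β * S ξ * f (I ξ) - μ₂ * I ξ)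
    (hSbd : ∀ ξ : ℝ, 0 < S ξ ∧ S ξ ≤ Λ / μ₁) (hIpos : ∀ ξ : ℝ, 0 < I ξ) :
    (∀ ξ : ℝ, I (ξ - 1) / I ξ < Real.exp ((2 * d₂ + μ₂) / c)) ∧
    (∀ ξ : ℝ, I (ξ + 1) / I ξ <
      4 * (c / d₂) ^ 4 * Real.exp (3 * ((2 * d₂ + μ₂) / c))) ∧
    ∃ C : ℝ, ∀ ξ : ℝ, |deriv I ξ / I ξ| ≤ C :=
  harnack_estimates_I_general d₂ Λ β μ₁ μ₂ hd₂ hβ f hf0 hf' hfratio c hc S I hI hIeq hSbd hIpos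
end

section
/- Assume in addition that f(x) → +∞ as x → +∞. Let 0 < c₁ ≤ c₂ and let (S_k, I_k, c_k), k ∈ ℕ, be a sequence of traveling wave profiles with speeds c_k ∈ [c₁, c₂] such that 0 < S_k(ξ) < S₀ and I_k(ξ) > 0 for all ξ ∈ ℝ and all k. If (ξ_k) is a sequence of reals with I_k(ξ_k) → +∞ as k → +∞, then S_k(ξ_k) → 0 as k → +∞. -/
open Real Filter Set Topology

/-!
A Harnack-type estimate drives the proof. The `I` equation gives `c I' ≥ d₂ I(· + 1) - B I` with
`B = 2 d₂ + μ₂`, so `I` decays at most exponentially and, fed by diffusion from the right,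
`I ≥ κ I(ξ)` on `[ξ - 1/2, ξ]` with `κ` depending only on `d₂, μ₂, c₁, c₂`. Hence
`f(I) ≥ F := f(κ I_k(ξ_k)) → ∞` there. The `S` equation gives `S' ≤ N / c₁` with
`N = 2 d₁ S₀ + Λ`, so `S ≥ S_k(ξ_k) - N ρ / c₁` on `[ξ_k - ρ, ξ_k]`; the mean value theorem for
`S` on that interval, where the incidence term is large, and `0 < S < S₀` yield
`β F (S_k(ξ_k) - N ρ / c₁) ρ ≤ N ρ + c₂ S₀`.
Letting `k → ∞` and then `ρ → 0` gives `S_k(ξ_k) → 0`.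
-/

theorem add_sub_mul_exp_le_of_le_deriv {g : ℝ → ℝ} (hg : Differentiable ℝ g) {α P a t : ℝ}
    (hat : a ≤ t) (h : ∀ s ∈ Ioo a t, α * (P - g s) ≤ deriv g s) :
    P + (g a - P) * exp (-(α * (t - a))) ≤ g t := by
  have hd : ∀ s, HasDerivAt (fun s => exp (α * s) * (g s - P))
      (exp (α * s) * (deriv g s - α * (P - g s))) s := fun s => by
    have hexp : HasDerivAt (fun s => exp (α * s)) (exp (α * s) * α) s := by
      simpa using ((hasDerivAt_id s).const_mul α).exp
    exact (hexp.fun_mul ((hg s).hasDerivAt.sub_const P)).congr_deriv (by ring)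
  have hmono : MonotoneOn (fun s => exp (α * s) * (g s - P)) (Icc a t) :=
    monotoneOn_of_deriv_nonneg (convex_Icc a t)
      (fun s _ => (hd s).continuousAt.continuousWithinAt)
      (fun s _ => (hd s).differentiableAt.differentiableWithinAt) fun s hs => by
        rw [interior_Icc] at hs
        rw [(hd s).deriv]
        exact mul_nonneg (exp_pos _).le (sub_nonneg.2 (h s hs))
  have key := hmono (left_mem_Icc.2 hat) (right_mem_Icc.2 hat) hat
  have hsplit : exp (-(α * (t - a))) = exp (-(α * t)) * exp (α * a) := by
    rw [← exp_add]; ring_nf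
  have hcancel : exp (-(α * t)) * exp (α * t) = 1 := by rw [← exp_add]; simp
  calc P + (g a - P) * exp (-(α * (t - a)))
      = P + exp (-(α * t)) * (exp (α * a) * (g a - P)) := by rw [hsplit]; ring
    _ ≤ P + exp (-(α * t)) * (exp (α * t) * (g t - P)) := by gcongr
    _ = g t := by rw [← mul_assoc, hcancel]; ring

theorem tendsto_nhds_zero_of_mul_sub_mul_le {s F : ℕ → ℝ} {A : ℝ} {D : ℝ → ℝ}
    (hs : ∀ k, 0 ≤ s k) (hF : Tendsto F atTop atTop)
    (h : ∀ᶠ ρ in 𝓝[>] 0, ∀ k, F k * ((s k - A * ρ) * ρ) ≤ D ρ) :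
    Tendsto s atTop (𝓝 0) := by
  refine tendsto_order.2 ⟨fun a ha => .of_forall fun k => ha.trans_le (hs k), fun ε hε => ?_⟩
  have hAρ : Tendsto (fun ρ : ℝ => A * ρ) (𝓝[>] 0) (𝓝 0) := by
    simpa using ((continuous_const_mul A).tendsto 0).mono_left nhdsWithin_le_nhds
  obtain ⟨ρ, hρ, hAρ, hρpos⟩ :=
    (h.and ((hAρ.eventually (gt_mem_nhds (half_pos hε))).and self_mem_nhdsWithin)).exists
  have hD : Tendsto (fun k => D ρ / ρ / F k) atTop (𝓝 0) := tendsto_const_nhds.div_atTop hF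
  filter_upwards [hD.eventually (gt_mem_nhds (half_pos hε)), hF.eventually_gt_atTop 0]
    with k hk hFk
  have : s k - A * ρ ≤ D ρ / ρ / F k := by
    rw [div_div, le_div_iff₀ (mul_pos hρpos hFk)]
    linarith [hρ k]
  linarith

/-- With `B = 2 d₂ + μ₂` bounding the per-capita loss rate of `I`, the factor `e^{-B/c₁}`
controls the decay of `I` over one unit to the right, and `1 - e^{-B/(2 c₂)}` the growth
that this feeding produces within half a unit. -/
noncomputable def harnackConst (d₂ μ₂ c₁ c₂ : ℝ) : ℝ :=
  d₂ / (2 * d₂ + μ₂) * exp (-((2 * d₂ + μ₂) / c₁)) * (1 - exp (-((2 * d₂ + μ₂) / (2 * c₂))))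

theorem harnackConst_pos {d₂ μ₂ c₁ c₂ : ℝ} (hd₂ : 0 < d₂) (hμ₂ : 0 ≤ μ₂) (hc₂ : 0 < c₂) :
    0 < harnackConst d₂ μ₂ c₁ c₂ := by
  have hB : 0 < 2 * d₂ + μ₂ := by linarith
  unfold harnackConst
  have : exp (-((2 * d₂ + μ₂) / (2 * c₂))) < 1 :=
    exp_lt_one_iff.2 (by simp only [Left.neg_neg_iff]; positivity)
  have : 0 < 1 - exp (-((2 * d₂ + μ₂) / (2 * c₂))) := by linarith
  positivity

section Profile

variable {d₁ d₂ Λ β μ₁ μ₂ c c₁ c₂ S₀ : ℝ} {f S I : ℝ → ℝ}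

theorem harnackConst_mul_le_of_I_eq (hd₂ : 0 < d₂) (hμ₂ : 0 ≤ μ₂) (hc₁ : 0 < c₁)
    (hc : c ∈ Icc c₁ c₂) (hI : Differentiable ℝ I) (hIpos : ∀ t, 0 < I t)
    (hinc : ∀ t, 0 ≤ β * S t * f (I t))
    (hIeq : ∀ t, c * deriv I t =
      d₂ * (I (t + 1) + I (t - 1) - 2 * I t) + β * S t * f (I t) - μ₂ * I t)
    {ξ t : ℝ} (ht : t ∈ Icc (ξ - 1 / 2) ξ) : harnackConst d₂ μ₂ c₁ c₂ * I ξ ≤ I t := by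
  set B := 2 * d₂ + μ₂
  have hB : 0 < B := by positivity
  have hc0 : 0 < c := hc₁.trans_le hc.1
  set α := B / c
  have hα : 0 ≤ α := by positivity
  -- diffusion from the right feeds `I` at rate `d₂ I(s + 1)`
  have hfeed : ∀ s, α * (d₂ / B * I (s + 1) - I s) ≤ deriv I s := fun s => by
    have : c * (α * (d₂ / B * I (s + 1) - I s)) = d₂ * I (s + 1) - B * I s := by
      rw [← mul_assoc, mul_div_cancel₀ B hc0.ne']
      field_simp
    refine le_of_mul_le_mul_left ?_ hc0
    rw [this, hIeq]
    nlinarith [hinc s, mul_pos hd₂ (hIpos (s - 1))]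
  have hdecay : ∀ s, α * (0 - I s) ≤ deriv I s := fun s =>
    le_trans (by nlinarith [mul_pos (div_pos hd₂ hB) (hIpos (s + 1))]) (hfeed s)
  have hright : ∀ s ∈ Icc (ξ - 1) ξ, exp (-α) * I ξ ≤ I (s + 1) := fun s hs => by
    have := add_sub_mul_exp_le_of_le_deriv hI (by linarith [hs.1] : ξ ≤ s + 1)
      fun s _ => hdecay s
    have hexp : exp (-α) ≤ exp (-(α * (s + 1 - ξ))) := exp_le_exp.2 (by nlinarith [hs.2])
    nlinarith [hIpos ξ]
  set P := d₂ / B * exp (-α) * I ξ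
  have hlin : ∀ s ∈ Ioo (ξ - 1) t, α * (P - I s) ≤ deriv I s := fun s hs => by
    have := mul_le_mul_of_nonneg_left (hright s ⟨hs.1.le, hs.2.le.trans ht.2⟩)
      (div_pos hd₂ hB).le
    exact (mul_le_mul_of_nonneg_left (by linarith) hα).trans (hfeed s)
  have hI_ge := add_sub_mul_exp_le_of_le_deriv hI (by linarith [ht.1]) hlin
  have hα₁ : α ≤ B / c₁ := div_le_div_of_nonneg_left hB.le hc₁ hc.1
  have hα₂ : B / (2 * c₂) ≤ α * (t - (ξ - 1)) := by
    have : B / (2 * c₂) ≤ α / 2 := by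
      rw [div_div, mul_comm c 2]
      exact div_le_div_of_nonneg_left hB.le (by positivity) (by linarith [hc.2])
    nlinarith [ht.1]
  have hc₂ : 0 < c₂ := hc0.trans_le hc.2
  have hgap : 0 ≤ 1 - exp (-(B / (2 * c₂))) :=
    sub_nonneg.2 (exp_le_one_iff.2 (by simp only [neg_nonpos]; positivity))
  have hP : d₂ / B * exp (-(B / c₁)) * I ξ ≤ P := by
    simp only [P]; gcongr; exact (hIpos ξ).le
  calc harnackConst d₂ μ₂ c₁ c₂ * I ξ
      = d₂ / B * exp (-(B / c₁)) * I ξ * (1 - exp (-(B / (2 * c₂)))) := by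
        unfold harnackConst; ring
    _ ≤ P * (1 - exp (-(α * (t - (ξ - 1))))) :=
        mul_le_mul hP (by gcongr) hgap (le_trans (by have := hIpos ξ; positivity) hP)
    _ ≤ I t := by nlinarith [mul_pos (hIpos (ξ - 1)) (exp_pos (-(α * (t - (ξ - 1)))))]

theorem mul_deriv_le_of_S_eq (hd₁ : 0 ≤ d₁) (hμ₁ : 0 ≤ μ₁) (hS : ∀ t, 0 < S t ∧ S t < S₀)
    (hSeq : ∀ t, c * deriv S t =
      d₁ * (S (t + 1) + S (t - 1) - 2 * S t) + Λ - μ₁ * S t - β * S t * f (I t))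
    (t : ℝ) : c * deriv S t ≤ 2 * d₁ * S₀ + Λ - β * S t * f (I t) := by
  rw [hSeq]
  nlinarith [hS (t + 1), hS (t - 1), hS t]

theorem mul_S_sub_le_of_le_f_I (hd₁ : 0 ≤ d₁) (hΛ : 0 ≤ Λ) (hμ₁ : 0 ≤ μ₁) (hβ : 0 ≤ β)
    (hc₁ : 0 < c₁) (hc : c ∈ Icc c₁ c₂) (hSd : Differentiable ℝ S)
    (hS : ∀ t, 0 < S t ∧ S t < S₀) (hfI : ∀ t, 0 ≤ f (I t))
    (hSeq : ∀ t, c * deriv S t =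
      d₁ * (S (t + 1) + S (t - 1) - 2 * S t) + Λ - μ₁ * S t - β * S t * f (I t))
    {b ρ F : ℝ} (hρ : 0 ≤ ρ) (hF : 0 ≤ F) (hFI : ∀ t ∈ Icc (b - ρ) b, F ≤ f (I t)) :
    β * F * ((S b - (2 * d₁ * S₀ + Λ) / c₁ * ρ) * ρ) ≤ (2 * d₁ * S₀ + Λ) * ρ + c₂ * S₀ := by
  set N := 2 * d₁ * S₀ + Λ
  have hc0 : 0 < c := hc₁.trans_le hc.1
  have hS₀ : 0 ≤ S₀ := (hS 0).1.le.trans (hS 0).2.le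
  have hN : 0 ≤ N := by positivity
  have hsource := mul_deriv_le_of_S_eq hd₁ hμ₁ hS hSeq
  have hderiv : ∀ t, deriv S t ≤ N / c₁ := fun t => by
    rw [le_div_iff₀ hc₁]
    nlinarith [hsource t, mul_nonneg (mul_nonneg hβ (hS t).1.le) (hfI t), hc.1]
  set σ := S b - N / c₁ * ρ
  have hσ : ∀ t ∈ Icc (b - ρ) b, σ ≤ S t := fun t ht => by
    have := image_sub_le_mul_sub_of_deriv_le hSd hderiv ht.2
    nlinarith [ht.1, div_nonneg hN hc₁.le]
  -- on `[b - ρ, b]` the incidence term `β S f(I)` is at least `β F σ`, which drives `S` down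
  have hderiv' : ∀ t ∈ interior (Icc (b - ρ) b), deriv S t ≤ (N - β * F * σ) / c := by
    intro t ht
    rw [interior_Icc] at ht
    have ht' := Ioo_subset_Icc_self ht
    rw [le_div_iff₀ hc0]
    nlinarith [hsource t, hσ t ht', hFI t ht', mul_nonneg hβ hF, mul_nonneg hβ (hS t).1.le]
  have hdrop := (convex_Icc (b - ρ) b).image_sub_le_mul_sub_of_deriv_le
    hSd.continuous.continuousOn hSd.differentiableOn hderiv' (b - ρ)
    (left_mem_Icc.2 (by linarith)) b (right_mem_Icc.2 (by linarith)) (by linarith)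
  rw [sub_sub_cancel, div_mul_eq_mul_div, le_div_iff₀ hc0] at hdrop
  nlinarith [hS b, hS (b - ρ), hc.2, mul_le_mul_of_nonneg_left hc.2 hS₀]

end Profile

theorem S_vanishes_where_I_blows_up_general
    (d₁ d₂ Λ β μ₁ μ₂ : ℝ) (hd₁ : 0 < d₁) (hd₂ : 0 < d₂) (hΛ : 0 < Λ)
    (hβ : 0 < β) (hμ₁ : 0 < μ₁) (hμ₂ : 0 < μ₂)
    (f : ℝ → ℝ) (hf0 : f 0 = 0) (hfC1 : ContDiff ℝ 1 f)
    (hf' : ∀ I : ℝ, 0 ≤ I → 0 < deriv f I)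
    (hfinf : Tendsto f atTop atTop)
    (c₁ c₂ : ℝ) (hc₁ : 0 < c₁) (hc₁₂ : c₁ ≤ c₂)
    (S I : ℕ → ℝ → ℝ) (c : ℕ → ℝ)
    (hck : ∀ k : ℕ, c k ∈ Set.Icc c₁ c₂)
    (hSk : ∀ k : ℕ, ContDiff ℝ 1 (S k)) (hIk : ∀ k : ℕ, ContDiff ℝ 1 (I k))
    (hSeq : ∀ k : ℕ, ∀ ξ : ℝ, c k * deriv (S k) ξ =
      d₁ * (S k (ξ + 1) + S k (ξ - 1) - 2 * S k ξ) + Λ - μ₁ * S k ξ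
        - β * S k ξ * f (I k ξ))
    (hIeq : ∀ k : ℕ, ∀ ξ : ℝ, c k * deriv (I k) ξ =
      d₂ * (I k (ξ + 1) + I k (ξ - 1) - 2 * I k ξ) + β * S k ξ * f (I k ξ)
        - μ₂ * I k ξ)
    (hSbd : ∀ k : ℕ, ∀ ξ : ℝ, 0 < S k ξ ∧ S k ξ < Λ / μ₁)
    (hIpos : ∀ k : ℕ, ∀ ξ : ℝ, 0 < I k ξ)
    (ξ : ℕ → ℝ) (hblow : Tendsto (fun k => I k (ξ k)) atTop atTop) :
    Tendsto (fun k => S k (ξ k)) atTop (nhds 0) := by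
  have hfmono : MonotoneOn f (Ici 0) :=
    (strictMonoOn_of_deriv_pos (convex_Ici 0) hfC1.continuous.continuousOn
      fun x hx => hf' x (interior_subset hx)).monotoneOn
  have hfnn : ∀ x, 0 ≤ x → 0 ≤ f x := fun x hx => hf0 ▸ hfmono self_mem_Ici hx hx
  set κ := harnackConst d₂ μ₂ c₁ c₂
  have hκ : 0 < κ := harnackConst_pos hd₂ hμ₂.le (hc₁.trans_le hc₁₂)
  have hF : Tendsto (fun k => β * f (κ * I k (ξ k))) atTop atTop :=
    (hfinf.comp (hblow.const_mul_atTop hκ)).const_mul_atTop hβ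
  refine tendsto_nhds_zero_of_mul_sub_mul_le (A := (2 * d₁ * (Λ / μ₁) + Λ) / c₁)
    (D := fun ρ => (2 * d₁ * (Λ / μ₁) + Λ) * ρ + c₂ * (Λ / μ₁))
    (fun k => (hSbd k (ξ k)).1.le) hF ?_
  filter_upwards [Ioc_mem_nhdsGT (by norm_num : (0 : ℝ) < 1 / 2)] with ρ hρ k
  have hfI : ∀ t, 0 ≤ f (I k t) := fun t => hfnn _ (hIpos k t).le
  have hFI : ∀ t ∈ Icc (ξ k - ρ) (ξ k), f (κ * I k (ξ k)) ≤ f (I k t) := fun t ht =>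
    hfmono (mul_pos hκ (hIpos k _)).le (hIpos k t).le <|
      harnackConst_mul_le_of_I_eq hd₂ hμ₂.le hc₁ (hck k) ((hIk k).differentiable one_ne_zero)
        (hIpos k) (fun t => mul_nonneg (mul_nonneg hβ.le (hSbd k t).1.le) (hfI t)) (hIeq k)
        ⟨by linarith [ht.1, hρ.2], ht.2⟩
  exact mul_S_sub_le_of_le_f_I hd₁.le hΛ.le hμ₁.le hβ.le hc₁ (hck k)
    ((hSk k).differentiable one_ne_zero) (hSbd k) hfI (hSeq k) hρ.1.le
    (hfnn _ (mul_pos hκ (hIpos k _)).le) hFI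

/-- **Vanishing of the susceptible component where the infected one blows up**
(Lemma 3.3 / Appendix B).  Assume additionally `f(x) → +∞` as `x → +∞`.  If
`(S_k, I_k, c_k)` is a sequence of traveling wave profiles with speeds
`c_k ∈ [c₁, c₂] ⊂ (0, ∞)` with `0 < S_k < S₀`, `I_k > 0`, and `(ξ_k)` is a sequence
of reals with `I_k(ξ_k) → +∞`, then `S_k(ξ_k) → 0`. -/
theorem S_vanishes_where_I_blows_up
    (d₁ d₂ Λ β μ₁ μ₂ : ℝ) (hd₁ : 0 < d₁) (hd₂ : 0 < d₂) (hΛ : 0 < Λ)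
    (hβ : 0 < β) (hμ₁ : 0 < μ₁) (hμ₂ : 0 < μ₂)
    (f : ℝ → ℝ) (hf0 : f 0 = 0) (hfC1 : ContDiff ℝ 1 f)
    (hf' : ∀ I : ℝ, 0 ≤ I → 0 < deriv f I)
    (hfratio : ∀ I J : ℝ, 0 < I → I ≤ J → f J / J ≤ f I / I)
    (hfinf : Tendsto f atTop atTop)
    (c₁ c₂ : ℝ) (hc₁ : 0 < c₁) (hc₁₂ : c₁ ≤ c₂)
    (S I : ℕ → ℝ → ℝ) (c : ℕ → ℝ)
    (hck : ∀ k : ℕ, c k ∈ Set.Icc c₁ c₂)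
    (hSk : ∀ k : ℕ, ContDiff ℝ 1 (S k)) (hIk : ∀ k : ℕ, ContDiff ℝ 1 (I k))
    (hSeq : ∀ k : ℕ, ∀ ξ : ℝ, c k * deriv (S k) ξ =
      d₁ * (S k (ξ + 1) + S k (ξ - 1) - 2 * S k ξ) + Λ - μ₁ * S k ξ
        - β * S k ξ * f (I k ξ))
    (hIeq : ∀ k : ℕ, ∀ ξ : ℝ, c k * deriv (I k) ξ =
      d₂ * (I k (ξ + 1) + I k (ξ - 1) - 2 * I k ξ) + β * S k ξ * f (I k ξ)
        - μ₂ * I k ξ)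
    (hSbd : ∀ k : ℕ, ∀ ξ : ℝ, 0 < S k ξ ∧ S k ξ < Λ / μ₁)
    (hIpos : ∀ k : ℕ, ∀ ξ : ℝ, 0 < I k ξ)
    (ξ : ℕ → ℝ) (hblow : Tendsto (fun k => I k (ξ k)) atTop atTop) :
    Tendsto (fun k => S k (ξ k)) atTop (nhds 0) :=
  S_vanishes_where_I_blows_up_general d₁ d₂ Λ β μ₁ μ₂ hd₁ hd₂ hΛ hβ hμ₁ hμ₂ f hf0 hfC1 hf' hfinf c₁
    c₂ hc₁ hc₁₂ S I c hck hSk hIk hSeq hIeq hSbd hIpos ξ hblow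
end

section
/- Assume ℛ₀ > 1, assume in addition that f(x) → +∞ as x → +∞, let c > c*, and let λ₁ be the smaller positive root of Δ(·, c) = 0. Let (S, I) be a traveling wave profile with speed c such that 0 < S(ξ) < S₀ and 0 < I(ξ) ≤ e^{λ₁ξ} for all ξ ∈ ℝ. Then I is bounded on ℝ. -/
/-!
With `k = (2d₂ + μ₂)/c` the infected equation reads
`(c e^{kξ} I(ξ))' = e^{kξ} (d₂ (I(ξ+1) + I(ξ-1)) + g(ξ))` with `g = β S f(I) ≥ 0`, while the
susceptible equation, integrated over a unit interval, bounds `∫_a^{a+1} g` uniformly since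
`0 < S < S₀`. Integrating the first identity over `[ξ - n, ξ]` turns a bound
`I ≤ A e^{λ₁ξ} + B` into `I ≤ θ A e^{λ₁ξ} + θ' B + G` with `θ, θ' < 1` once `n` is large;
`θ < 1` is the inequality `d₂ (e^{λ₁} + e^{-λ₁} - 2) - c λ₁ - μ₂ = -β S₀ f'(0) < 0` given by
`Δ(λ₁, c) = 0`. Iterating from `A = 1, B = 0` gives `I ≤ G / (1 - θ')`.
-/

open Real Filter intervalIntegral

lemma integral_exp_mul_le {m : ℝ} (hm : 0 < m) (p q : ℝ) :
    ∫ η in p..q, exp (m * η) ≤ exp (m * q) / m := by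
  rw [integral_comp_mul_left (fun x => exp x) hm.ne', integral_exp, smul_eq_mul, inv_mul_eq_div]
  gcongr
  linarith [exp_pos (m * p)]

lemma integral_sub_nat_le_of_forall_integral_unit_le {g : ℝ → ℝ} (hg : Continuous g) {K : ℝ}
    (hK : ∀ a, ∫ η in a..a + 1, g η ≤ K) (ξ : ℝ) (n : ℕ) :
    ∫ η in ξ - n..ξ, g η ≤ n * K := by
  induction n with
  | zero => simp
  | succ n ih =>
    have hlast := hK (ξ - (n + 1))
    rw [show ξ - (n + 1) + 1 = ξ - n by ring] at hlast
    rw [← integral_add_adjacent_intervals (b := ξ - n) (hg.intervalIntegrable _ _)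
      (hg.intervalIntegrable _ _)]
    push_cast
    linarith

lemma integral_unit_le_of_susceptible_eq {c d₁ Λ μ₁ S₀ : ℝ} {S g : ℝ → ℝ}
    (hc : 0 ≤ c) (hd₁ : 0 ≤ d₁) (hμ₁ : 0 ≤ μ₁) (hS : ContDiff ℝ 1 S) (hg : Continuous g)
    (hSeq : ∀ ξ, c * deriv S ξ =
      d₁ * (S (ξ + 1) + S (ξ - 1) - 2 * S ξ) + Λ - μ₁ * S ξ - g ξ)
    (hSbd : ∀ ξ, 0 ≤ S ξ ∧ S ξ ≤ S₀) (a : ℝ) :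
    ∫ η in a..a + 1, g η ≤ c * S₀ + 2 * d₁ * S₀ + Λ := by
  have hS' : Continuous (deriv S) := hS.continuous_deriv le_rfl
  have hpt : ∀ η, g η ≤ -(c * deriv S η) + (2 * d₁ * S₀ + Λ) := by
    intro η
    have hnext := mul_le_mul_of_nonneg_left (hSbd (η + 1)).2 hd₁
    have hprev := mul_le_mul_of_nonneg_left (hSbd (η - 1)).2 hd₁
    have hloss := mul_nonneg (by linarith : 0 ≤ 2 * d₁ + μ₁) (hSbd η).1
    linarith [hSeq η]
  calc ∫ η in a..a + 1, g η
      ≤ ∫ η in a..a + 1, (-(c * deriv S η) + (2 * d₁ * S₀ + Λ)) :=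
        integral_mono_on (by linarith) (hg.intervalIntegrable _ _)
          (Continuous.intervalIntegrable (by fun_prop) _ _) (fun η _ => hpt η)
    _ = c * (S a - S (a + 1)) + (2 * d₁ * S₀ + Λ) := by
        rw [integral_add (Continuous.intervalIntegrable (by fun_prop) _ _)
            intervalIntegrable_const,
          integral_neg, integral_const_mul,
          integral_deriv_eq_sub (fun x _ => (hS.differentiable one_ne_zero) x)
            (hS'.intervalIntegrable _ _)]
        simp only [integral_const, smul_eq_mul, add_sub_cancel_left, one_mul]
        ring
    _ ≤ c * S₀ + 2 * d₁ * S₀ + Λ := by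
        nlinarith [(hSbd a).2, (hSbd (a + 1)).1]

lemma forall_le_div_of_contraction_step {u e : ℝ → ℝ} {θ θ' G : ℝ} (hθ : 0 ≤ θ) (hθ1 : θ < 1)
    (hθ'1 : θ' < 1) (hG : 0 ≤ G) (hu : ∀ ξ, u ξ ≤ e ξ)
    (hstep : ∀ A B, 0 ≤ A → 0 ≤ B → (∀ η, u η ≤ A * e η + B) →
      ∀ ξ, u ξ ≤ θ * A * e ξ + θ' * B + G) (ξ : ℝ) :
    u ξ ≤ G / (1 - θ') := by
  set D := G / (1 - θ')
  have hD : 0 ≤ D := div_nonneg hG (by linarith)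
  have hDfix : θ' * D + G = D := by
    have : 1 - θ' ≠ 0 := by linarith
    simp only [D]
    field_simp
    ring
  have hiter : ∀ n : ℕ, ∀ ξ, u ξ ≤ θ ^ n * e ξ + D := by
    intro n
    induction n with
    | zero => intro ξ; linarith [hu ξ]
    | succ n ih =>
      intro ξ
      have h := hstep _ _ (pow_nonneg hθ n) hD ih ξ
      rwa [add_assoc, hDfix, ← pow_succ'] at h
  have hlim : Tendsto (fun n : ℕ => θ ^ n * e ξ + D) atTop (nhds (0 * e ξ + D)) :=
    ((tendsto_pow_atTop_nhds_zero_of_lt_one hθ hθ1).mul_const _).add_const _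
  rw [zero_mul, zero_add] at hlim
  exact ge_of_tendsto' hlim (fun n => hiter n ξ)

section LatticeEquation

variable {c d₂ μ₂ k : ℝ} {I g : ℝ → ℝ}

lemma hasDerivAt_mul_exp_mul_of_lattice_eq (hk : c * k = 2 * d₂ + μ₂)
    (hI : Differentiable ℝ I)
    (hIeq : ∀ ξ, c * deriv I ξ = d₂ * (I (ξ + 1) + I (ξ - 1) - 2 * I ξ) + g ξ - μ₂ * I ξ)
    (ξ : ℝ) :
    HasDerivAt (fun t => c * (exp (k * t) * I t))
      (exp (k * ξ) * (d₂ * (I (ξ + 1) + I (ξ - 1)) + g ξ)) ξ := by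
  have hexp : HasDerivAt (fun t => exp (k * t)) (exp (k * ξ) * k) ξ := by
    simpa using ((hasDerivAt_id ξ).const_mul k).exp
  refine ((hexp.mul (hI ξ).hasDerivAt).const_mul c).congr_deriv ?_
  linear_combination (exp (k * ξ) * I ξ) * hk + exp (k * ξ) * hIeq ξ

lemma mul_exp_mul_sub_eq_integral_of_lattice_eq (hk : c * k = 2 * d₂ + μ₂)
    (hI : Differentiable ℝ I) (hg : Continuous g)
    (hIeq : ∀ ξ, c * deriv I ξ = d₂ * (I (ξ + 1) + I (ξ - 1) - 2 * I ξ) + g ξ - μ₂ * I ξ)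
    (p q : ℝ) :
    c * (exp (k * q) * I q) - c * (exp (k * p) * I p) =
      ∫ η in p..q, exp (k * η) * (d₂ * (I (η + 1) + I (η - 1)) + g η) := by
  have := hI.continuous
  rw [intervalIntegral.integral_eq_sub_of_hasDerivAt
    (fun η _ => hasDerivAt_mul_exp_mul_of_lattice_eq hk hI hIeq η)
    (Continuous.intervalIntegrable (by fun_prop) _ _)]

lemma integral_exp_mul_lattice_forcing_le (hd₂ : 0 ≤ d₂) (hk : 0 < k) {lam A B K : ℝ}
    (hlam : 0 ≤ lam) (hA : 0 ≤ A) (hB : 0 ≤ B) (hI : Continuous I)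
    (hIle : ∀ η, I η ≤ A * exp (lam * η) + B) (hg : Continuous g) (hg0 : ∀ η, 0 ≤ g η)
    (hgK : ∀ a, ∫ η in a..a + 1, g η ≤ K) (ξ : ℝ) (n : ℕ) :
    ∫ η in ξ - n..ξ, exp (k * η) * (d₂ * (I (η + 1) + I (η - 1)) + g η) ≤
      exp (k * ξ) * (d₂ * A * (exp lam + exp (-lam)) * exp (lam * ξ) / (k + lam)
        + 2 * d₂ * B / k + n * K) := by
  set a := d₂ * A * (exp lam + exp (-lam))
  have hpt : ∀ η ∈ Set.Icc (ξ - n) ξ,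
      exp (k * η) * (d₂ * (I (η + 1) + I (η - 1)) + g η) ≤
        a * exp ((k + lam) * η) + 2 * d₂ * B * exp (k * η) + exp (k * ξ) * g η := by
    intro η hη
    have hnbr := mul_le_mul_of_nonneg_left
      (mul_le_mul_of_nonneg_left (add_le_add (hIle (η + 1)) (hIle (η - 1))) hd₂)
      (exp_pos (k * η)).le
    have hsrc : exp (k * η) * g η ≤ exp (k * ξ) * g η :=
      mul_le_mul_of_nonneg_right (exp_le_exp.2 (by nlinarith [hη.2])) (hg0 η)
    have hexp : exp (k * η) * (d₂ * (A * exp (lam * (η + 1)) + B + (A * exp (lam * (η - 1)) + B)))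
        = a * exp ((k + lam) * η) + 2 * d₂ * B * exp (k * η) := by
      rw [show lam * (η + 1) = lam * η + lam by ring, show lam * (η - 1) = lam * η + -lam by ring,
        add_mul, exp_add, exp_add, exp_add]
      ring
    linarith
  have hkl : 0 < k + lam := by linarith
  have hn : ξ - n ≤ ξ := by linarith [n.cast_nonneg (α := ℝ)]
  calc ∫ η in ξ - n..ξ, exp (k * η) * (d₂ * (I (η + 1) + I (η - 1)) + g η)
      ≤ ∫ η in ξ - n..ξ, (a * exp ((k + lam) * η) + 2 * d₂ * B * exp (k * η)
          + exp (k * ξ) * g η) :=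
        integral_mono_on hn (Continuous.intervalIntegrable (by fun_prop) _ _)
          (Continuous.intervalIntegrable (by fun_prop) _ _) hpt
    _ = a * (∫ η in ξ - n..ξ, exp ((k + lam) * η))
          + 2 * d₂ * B * (∫ η in ξ - n..ξ, exp (k * η))
          + exp (k * ξ) * (∫ η in ξ - n..ξ, g η) := by
        rw [integral_add (Continuous.intervalIntegrable (by fun_prop) _ _)
            (Continuous.intervalIntegrable (by fun_prop) _ _),
          integral_add (Continuous.intervalIntegrable (by fun_prop) _ _)
            (Continuous.intervalIntegrable (by fun_prop) _ _),
          integral_const_mul, integral_const_mul, integral_const_mul]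
    _ ≤ a * (exp ((k + lam) * ξ) / (k + lam)) + 2 * d₂ * B * (exp (k * ξ) / k)
          + exp (k * ξ) * (n * K) := by
        gcongr
        · exact integral_exp_mul_le hkl _ _
        · exact integral_exp_mul_le hk _ _
        · exact integral_sub_nat_le_of_forall_integral_unit_le hg hgK ξ n
    _ = _ := by
        rw [add_mul, exp_add]
        ring

lemma le_of_lattice_eq_of_le_mul_exp_add (hc : 0 < c) (hk : c * k = 2 * d₂ + μ₂)
    (hd₂ : 0 ≤ d₂) (hk0 : 0 < k) {lam A B K : ℝ} (hlam : 0 ≤ lam) (hA : 0 ≤ A) (hB : 0 ≤ B)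
    (hI : Differentiable ℝ I) (hg : Continuous g) (hg0 : ∀ η, 0 ≤ g η)
    (hgK : ∀ a, ∫ η in a..a + 1, g η ≤ K)
    (hIeq : ∀ ξ, c * deriv I ξ = d₂ * (I (ξ + 1) + I (ξ - 1) - 2 * I ξ) + g ξ - μ₂ * I ξ)
    (hIle : ∀ η, I η ≤ A * exp (lam * η) + B) (n : ℕ) (ξ : ℝ) :
    I ξ ≤ (d₂ * (exp lam + exp (-lam)) / (c * (k + lam)) + exp (-(k * n))) * A * exp (lam * ξ)
      + (2 * d₂ / (c * k) + exp (-(k * n))) * B + n * K / c := by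
  have hduhamel := mul_exp_mul_sub_eq_integral_of_lattice_eq hk hI hg hIeq (ξ - n) ξ
  have hforcing := integral_exp_mul_lattice_forcing_le hd₂ hk0 hlam hA hB hI.continuous hIle hg
    hg0 hgK ξ n
  have hstart : I (ξ - n) ≤ A * exp (lam * ξ) + B := by
    refine (hIle _).trans ?_
    gcongr
    nlinarith [n.cast_nonneg (α := ℝ)]
  have hstart' : c * (exp (k * (ξ - n)) * I (ξ - n))
      ≤ c * (exp (k * ξ) * (exp (-(k * n)) * (A * exp (lam * ξ) + B))) := by
    rw [show k * (ξ - n) = k * ξ + -(k * n) by ring, exp_add, mul_assoc (exp (k * ξ))]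
    gcongr
  have hkl : 0 < k + lam := by linarith
  rw [← mul_le_mul_iff_of_pos_left (mul_pos hc (exp_pos (k * ξ)))]
  calc c * exp (k * ξ) * I ξ
      ≤ c * (exp (k * ξ) * (exp (-(k * n)) * (A * exp (lam * ξ) + B)))
        + exp (k * ξ) * (d₂ * A * (exp lam + exp (-lam)) * exp (lam * ξ) / (k + lam)
          + 2 * d₂ * B / k + n * K) := by linarith
    _ = _ := by
        field_simp
        ring

theorem exists_forall_le_of_lattice_eq (hc : 0 < c) (hd₂ : 0 ≤ d₂) (hμ₂ : 0 < μ₂) {lam K : ℝ}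
    (hlam : 0 ≤ lam) (hΔ : d₂ * (exp lam + exp (-lam) - 2) - c * lam - μ₂ < 0)
    (hI : Differentiable ℝ I) (hg : Continuous g) (hg0 : ∀ η, 0 ≤ g η)
    (hgK : ∀ a, ∫ η in a..a + 1, g η ≤ K)
    (hIeq : ∀ ξ, c * deriv I ξ = d₂ * (I (ξ + 1) + I (ξ - 1) - 2 * I ξ) + g ξ - μ₂ * I ξ)
    (hIle : ∀ ξ, I ξ ≤ exp (lam * ξ)) :
    ∃ C, ∀ ξ, I ξ ≤ C := by
  set k := (2 * d₂ + μ₂) / c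
  have hck : c * k = 2 * d₂ + μ₂ := mul_div_cancel₀ _ hc.ne'
  have hk : 0 < k := by positivity
  have hK : 0 ≤ K := (integral_nonneg zero_le_one fun η _ => hg0 η).trans (by simpa using hgK 0)
  set ρ := d₂ * (exp lam + exp (-lam)) / (c * (k + lam))
  set σ := 2 * d₂ / (c * k)
  have hρ : ρ < 1 := by
    have hden : c * (k + lam) = 2 * d₂ + μ₂ + c * lam := by rw [mul_add, hck]
    rw [div_lt_one (by positivity), hden]
    linarith
  have hσ : σ < 1 := by
    rw [div_lt_one (by positivity), hck]
    linarith
  obtain ⟨n, hn⟩ : ∃ n : ℕ, exp (-(k * n)) < min (1 - ρ) (1 - σ) :=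
    ((tendsto_exp_neg_atTop_nhds_zero.comp
      (tendsto_natCast_atTop_atTop.const_mul_atTop hk)).eventually
        (gt_mem_nhds (lt_min (by linarith) (by linarith)))).exists
  exact ⟨_, forall_le_div_of_contraction_step (e := fun ξ => exp (lam * ξ)) (by positivity)
    (by linarith [min_le_left (1 - ρ) (1 - σ)]) (by linarith [min_le_right (1 - ρ) (1 - σ)])
    (by positivity) (by simpa using hIle)
    (fun A B hA hB hAB => le_of_lattice_eq_of_le_mul_exp_add hc hck hd₂ hk hlam hA hB hI hg hg0
      hgK hIeq hAB n)⟩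

end LatticeEquation

theorem I_bounded_general
    (d₁ d₂ Λ β μ₁ μ₂ : ℝ) (hd₁ : 0 < d₁) (hd₂ : 0 < d₂)
    (hβ : 0 < β) (hμ₁ : 0 < μ₁) (hμ₂ : 0 < μ₂)
    (f : ℝ → ℝ) (hf0 : f 0 = 0) (hfC1 : ContDiff ℝ 1 f)
    (hf' : ∀ I : ℝ, 0 ≤ I → 0 < deriv f I)
    (cstar : ℝ) (hcstar : 0 < cstar)
    (c : ℝ) (hc : cstar < c)
    (lam₁ : ℝ) (hlam₁pos : 0 < lam₁)
    (hlam₁root : d₂ * (Real.exp lam₁ + Real.exp (-lam₁) - 2)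
      - c * lam₁ + β * (Λ / μ₁) * deriv f 0 - μ₂ = 0)
    (S I : ℝ → ℝ) (hS : ContDiff ℝ 1 S) (hI : ContDiff ℝ 1 I)
    (hSeq : ∀ ξ : ℝ, c * deriv S ξ =
      d₁ * (S (ξ + 1) + S (ξ - 1) - 2 * S ξ) + Λ - μ₁ * S ξ - β * S ξ * f (I ξ))
    (hIeq : ∀ ξ : ℝ, c * deriv I ξ =
      d₂ * (I (ξ + 1) + I (ξ - 1) - 2 * I ξ) + β * S ξ * f (I ξ) - μ₂ * I ξ)
    (hSbd : ∀ ξ : ℝ, 0 < S ξ ∧ S ξ < Λ / μ₁)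
    (hIbd : ∀ ξ : ℝ, 0 < I ξ ∧ I ξ ≤ Real.exp (lam₁ * ξ)) :
    ∃ C : ℝ, ∀ ξ : ℝ, I ξ ≤ C := by
  have hc0 : 0 < c := hcstar.trans hc
  have hfI : ∀ ξ, 0 < f (I ξ) := by
    have hmono : StrictMonoOn f (Set.Ici 0) :=
      strictMonoOn_of_deriv_pos (convex_Ici 0) hfC1.continuous.continuousOn
        fun x hx => hf' x (interior_subset hx)
    intro ξ
    simpa [hf0] using hmono Set.self_mem_Ici (hIbd ξ).1.le (hIbd ξ).1
  have hg : Continuous fun η => β * S η * f (I η) := by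
    have := hS.continuous
    have := hI.continuous
    have := hfC1.continuous
    fun_prop
  have hproduction : 0 < β * (Λ / μ₁) * deriv f 0 :=
    mul_pos (mul_pos hβ ((hSbd 0).1.trans (hSbd 0).2)) (hf' 0 le_rfl)
  exact exists_forall_le_of_lattice_eq hc0 hd₂.le hμ₂ hlam₁pos.le (by linarith)
    (hI.differentiable one_ne_zero) hg (fun η => (mul_pos (mul_pos hβ (hSbd η).1) (hfI η)).le)
    (integral_unit_le_of_susceptible_eq hc0.le hd₁.le hμ₁.le hS hg hSeq
      fun ξ => ⟨(hSbd ξ).1.le, (hSbd ξ).2.le⟩)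
    hIeq fun ξ => (hIbd ξ).2

/-- **Boundedness of the infected component** (Lemma 3.5 / Appendix C).
Assume `ℛ₀ > 1`, `f(x) → +∞` as `x → +∞`, `c > c*`, and let `λ₁` be the smaller
positive root of `Δ(·, c) = 0`.  If `(S, I)` is a traveling wave profile with speed
`c` such that `0 < S(ξ) < S₀` and `0 < I(ξ) ≤ e^{λ₁ξ}` for all `ξ`, then `I` is
bounded on `ℝ`. -/
theorem I_bounded
    (d₁ d₂ Λ β μ₁ μ₂ : ℝ) (hd₁ : 0 < d₁) (hd₂ : 0 < d₂) (hΛ : 0 < Λ)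
    (hβ : 0 < β) (hμ₁ : 0 < μ₁) (hμ₂ : 0 < μ₂)
    (f : ℝ → ℝ) (hf0 : f 0 = 0) (hfC1 : ContDiff ℝ 1 f)
    (hf' : ∀ I : ℝ, 0 ≤ I → 0 < deriv f I)
    (hfratio : ∀ I J : ℝ, 0 < I → I ≤ J → f J / J ≤ f I / I)
    (hfinf : Tendsto f atTop atTop)
    (hR₀ : 1 < β * (Λ / μ₁) * deriv f 0 / μ₂)
    (lamstar cstar : ℝ) (hlamstar : 0 < lamstar) (hcstar : 0 < cstar)
    (hΔstar : d₂ * (Real.exp lamstar + Real.exp (-lamstar) - 2)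
      - cstar * lamstar + β * (Λ / μ₁) * deriv f 0 - μ₂ = 0)
    (hdΔstar : d₂ * (Real.exp lamstar - Real.exp (-lamstar)) - cstar = 0)
    (c : ℝ) (hc : cstar < c)
    (lam₁ : ℝ) (hlam₁pos : 0 < lam₁) (hlam₁lt : lam₁ < lamstar)
    (hlam₁root : d₂ * (Real.exp lam₁ + Real.exp (-lam₁) - 2)
      - c * lam₁ + β * (Λ / μ₁) * deriv f 0 - μ₂ = 0)
    (S I : ℝ → ℝ) (hS : ContDiff ℝ 1 S) (hI : ContDiff ℝ 1 I)
    (hSeq : ∀ ξ : ℝ, c * deriv S ξ =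
      d₁ * (S (ξ + 1) + S (ξ - 1) - 2 * S ξ) + Λ - μ₁ * S ξ - β * S ξ * f (I ξ))
    (hIeq : ∀ ξ : ℝ, c * deriv I ξ =
      d₂ * (I (ξ + 1) + I (ξ - 1) - 2 * I ξ) + β * S ξ * f (I ξ) - μ₂ * I ξ)
    (hSbd : ∀ ξ : ℝ, 0 < S ξ ∧ S ξ < Λ / μ₁)
    (hIbd : ∀ ξ : ℝ, 0 < I ξ ∧ I ξ ≤ Real.exp (lam₁ * ξ)) :
    ∃ C : ℝ, ∀ ξ : ℝ, I ξ ≤ C :=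
  I_bounded_general d₁ d₂ Λ β μ₁ μ₂ hd₁ hd₂ hβ hμ₁ hμ₂ f hf0 hfC1 hf' cstar hcstar c hc lam₁
    hlam₁pos hlam₁root S I hS hI hSeq hIeq hSbd hIbd
end

section
/- Let (S, I) be a traveling wave profile with speed c > 0 such that 0 < S(ξ) < S₀ and I(ξ) > 0 for all ξ ∈ ℝ, and let (S*, I*) be an endemic equilibrium. Define g(x) := x − 1 − ln x for x > 0 and L(ξ) := c·S*·g(S(ξ)/S*) + c·I*·g(I(ξ)/I*) + d₁·S*·(∫₀¹ g(S(ξ−θ)/S*) dθ − ∫_{−1}⁰ g(S(ξ−θ)/S*) dθ) + d₂·I*·(∫₀¹ g(I(ξ−θ)/I*) dθ − ∫_{−1}⁰ g(I(ξ−θ)/I*) dθ). Then L is nonincreasing on ℝ, i.e. L(ξ₂) ≤ L(ξ₁) whenever ξ₁ ≤ ξ₂. -/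
/-!
Differentiating `∫₀¹ φ(ξ - θ) dθ - ∫₋₁⁰ φ(ξ - θ) dθ` gives the second difference
`2φ(ξ) - φ(ξ - 1) - φ(ξ + 1)`, so along the wave `L'` splits into a diffusion part and a
reaction part. For each component the diffusion part is `≤ 0` by `log r ≤ r - 1` applied to the
ratios of the shifted values to the central one. After eliminating `Λ` and `μ₂` with the
equilibrium relations, the reaction part is `-μ₁(S - S*)²/S`, minus `βS*f(I*)` times the
AM–GM excess of three positive numbers with product `1`, plus a positive multiple of
`(f(I)I* - I f(I*))(f(I) - f(I*))`, which is `≤ 0` because `f` increases while `f(I)/I` does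
not.
-/

open Real Filter MeasureTheory

theorem three_le_add_of_mul_eq_one {a b c : ℝ} (ha : 0 < a) (hb : 0 < b) (hc : 0 < c)
    (habc : a * b * c = 1) : 3 ≤ a + b + c := by
  have hlog : log a + log b + log c = 0 := by
    rw [← log_mul ha.ne' hb.ne', ← log_mul (by positivity) hc.ne', habc, log_one]
  linarith [log_le_sub_one_of_pos ha, log_le_sub_one_of_pos hb, log_le_sub_one_of_pos hc]

noncomputable def volterra (x : ℝ) : ℝ := x - 1 - log x

theorem hasDerivAt_volterra {x : ℝ} (hx : x ≠ 0) : HasDerivAt volterra (1 - x⁻¹) x :=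
  ((hasDerivAt_id x).sub_const 1).sub (hasDerivAt_log hx)

theorem volterra_second_difference_le {d a x xₗ xᵣ : ℝ} (hd : 0 ≤ d) (ha : 0 < a)
    (hx : 0 < x) (hxₗ : 0 < xₗ) (hxᵣ : 0 < xᵣ) :
    d * a * (2 * volterra (x / a) - volterra (xₗ / a) - volterra (xᵣ / a))
      ≤ (1 - a / x) * (d * (2 * x - xₗ - xᵣ)) := by
  have hgap : d * a * (2 * volterra (x / a) - volterra (xₗ / a) - volterra (xᵣ / a))
      - (1 - a / x) * (d * (2 * x - xₗ - xᵣ))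
      = d * a * ((log (xₗ / x) - (xₗ / x - 1)) + (log (xᵣ / x) - (xᵣ / x - 1))) := by
    simp only [volterra, log_div hx.ne' ha.ne', log_div hxₗ.ne' ha.ne', log_div hxᵣ.ne' ha.ne',
      log_div hxₗ.ne' hx.ne', log_div hxᵣ.ne' hx.ne']
    field_simp
    ring
  have : d * a * ((log (xₗ / x) - (xₗ / x - 1)) + (log (xᵣ / x) - (xᵣ / x - 1))) ≤ 0 :=
    mul_nonpos_of_nonneg_of_nonpos (by positivity)
      (by linarith [log_le_sub_one_of_pos (div_pos hxₗ hx),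
        log_le_sub_one_of_pos (div_pos hxᵣ hx)])
  linarith

theorem cross_mul_nonpos_of_monotoneOn {f : ℝ → ℝ} (hmono : MonotoneOn f (Set.Ioi 0))
    (hratio : AntitoneOn (fun x => f x / x) (Set.Ioi 0)) {x y : ℝ} (hx : 0 < x) (hy : 0 < y) :
    (f x * y - x * f y) * (f x - f y) ≤ 0 := by
  wlog hxy : x ≤ y generalizing x y
  · linarith [this hy hx (le_of_not_ge hxy)]
  have hf : f x ≤ f y := hmono hx hy hxy
  have hdiv : f y / y ≤ f x / x := hratio hx hy hxy
  rw [div_le_div_iff₀ hy hx] at hdiv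
  exact mul_nonpos_of_nonneg_of_nonpos (by linarith) (by linarith)

theorem sir_reaction_nonpos {Λ β μ₁ μ₂ S I Sstar Istar F Fstar : ℝ}
    (hβ : 0 ≤ β) (hμ₁ : 0 ≤ μ₁)
    (hS : 0 < S) (hI : 0 < I) (hSstar : 0 < Sstar) (hIstar : 0 < Istar)
    (hF : 0 < F) (hFstar : 0 < Fstar)
    (heq1 : Λ - β * Sstar * Fstar - μ₁ * Sstar = 0)
    (heq2 : β * Sstar * Fstar - μ₂ * Istar = 0)
    (hcross : (F * Istar - I * Fstar) * (F - Fstar) ≤ 0) :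
    (1 - Sstar / S) * (Λ - μ₁ * S - β * S * F) + (1 - Istar / I) * (β * S * F - μ₂ * I) ≤ 0 := by
  obtain rfl : Λ = β * Sstar * Fstar + μ₁ * Sstar := by linarith
  obtain rfl : μ₂ = β * Sstar * Fstar / Istar := by field_simp; linarith
  have hsplit : (1 - Sstar / S) * (β * Sstar * Fstar + μ₁ * Sstar - μ₁ * S - β * S * F)
      + (1 - Istar / I) * (β * S * F - β * Sstar * Fstar / Istar * I)
      = -(μ₁ * (S - Sstar) ^ 2 / S)
        - β * Sstar * Fstar * (Sstar / S + S * F * Istar / (Sstar * Fstar * I)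
            + I * Fstar / (Istar * F) - 3)
        + β * Sstar * ((F * Istar - I * Fstar) * (F - Fstar) / (Istar * F)) := by
    field_simp
    ring
  have hamgm := three_le_add_of_mul_eq_one (div_pos hSstar hS)
    (by positivity : 0 < S * F * Istar / (Sstar * Fstar * I))
    (by positivity : 0 < I * Fstar / (Istar * F)) (by field_simp)
  have hsquare : 0 ≤ μ₁ * (S - Sstar) ^ 2 / S := by positivity
  have hexcess : 0 ≤ β * Sstar * Fstar * (Sstar / S + S * F * Istar / (Sstar * Fstar * I)
      + I * Fstar / (Istar * F) - 3) := mul_nonneg (by positivity) (by linarith)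
  have hincidence : β * Sstar * ((F * Istar - I * Fstar) * (F - Fstar) / (Istar * F)) ≤ 0 :=
    mul_nonpos_of_nonneg_of_nonpos (by positivity)
      (div_nonpos_of_nonpos_of_nonneg hcross (by positivity))
  linarith

theorem hasDerivAt_delay_integral_sub {φ : ℝ → ℝ} (hφ : Continuous φ) (ξ : ℝ) :
    HasDerivAt (fun ξ => (∫ θ in (0:ℝ)..1, φ (ξ - θ)) - ∫ θ in (-1:ℝ)..0, φ (ξ - θ))
      (2 * φ ξ - φ (ξ - 1) - φ (ξ + 1)) ξ := by
  set Φ : ℝ → ℝ := fun x => ∫ t in (0:ℝ)..x, φ t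
  have hΦ : ∀ x, HasDerivAt Φ (φ x) x := fun x =>
    (hφ.integral_hasStrictDerivAt 0 x).hasDerivAt
  have hprimitive : (fun ξ => (∫ θ in (0:ℝ)..1, φ (ξ - θ)) - ∫ θ in (-1:ℝ)..0, φ (ξ - θ))
      = fun ξ => 2 * Φ ξ - Φ (ξ - 1) - Φ (ξ + 1) := by
    funext ξ
    simp only [intervalIntegral.integral_comp_sub_left φ ξ, sub_zero, sub_neg_eq_add, Φ]
    rw [← intervalIntegral.integral_interval_sub_left (hφ.intervalIntegrable 0 ξ)
        (hφ.intervalIntegrable 0 (ξ - 1)),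
      ← intervalIntegral.integral_interval_sub_left (hφ.intervalIntegrable 0 (ξ + 1))
        (hφ.intervalIntegrable 0 ξ)]
    ring
  rw [hprimitive]
  exact (((hΦ ξ).const_mul 2).sub ((hΦ (ξ - 1)).comp_sub_const ξ 1)).sub
    ((hΦ (ξ + 1)).comp_add_const ξ 1)

noncomputable def lyapunovComponent (c d a : ℝ) (x : ℝ → ℝ) (ξ : ℝ) : ℝ :=
  c * a * volterra (x ξ / a)
    + d * a * ((∫ θ in (0:ℝ)..1, volterra (x (ξ - θ) / a))
      - ∫ θ in (-1:ℝ)..0, volterra (x (ξ - θ) / a))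

theorem lyapunovComponent_hasDerivAt_le {c d a : ℝ} {x : ℝ → ℝ} (hd : 0 ≤ d) (ha : 0 < a)
    (hx : Differentiable ℝ x) (hpos : ∀ ξ, 0 < x ξ) {ξ R : ℝ}
    (hR : c * deriv x ξ = d * (x (ξ + 1) + x (ξ - 1) - 2 * x ξ) + R) :
    ∃ E, HasDerivAt (lyapunovComponent c d a x) E ξ ∧ E ≤ (1 - a / x ξ) * R := by
  have hratio : ∀ t, 0 < x t / a := fun t => div_pos (hpos t) ha
  have hcont : Continuous fun t => volterra (x t / a) :=
    ((hx.continuous.div_const a).sub continuous_const).sub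
      ((hx.continuous.div_const a).log fun t => (hratio t).ne')
  have hlocal : HasDerivAt (fun t => volterra (x t / a))
      ((1 - (x ξ / a)⁻¹) * (deriv x ξ / a)) ξ :=
    HasDerivAt.comp (h₂ := volterra) ξ (hasDerivAt_volterra (hratio ξ).ne')
      ((hx ξ).hasDerivAt.div_const a)
  refine ⟨_, (hlocal.const_mul (c * a)).add
    ((hasDerivAt_delay_integral_sub hcont ξ).const_mul (d * a)), ?_⟩
  have hdiff := volterra_second_difference_le hd ha (hpos ξ) (hpos (ξ - 1)) (hpos (ξ + 1))
  have hlocal_eq : c * a * ((1 - (x ξ / a)⁻¹) * (deriv x ξ / a))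
      = (1 - a / x ξ) * (c * deriv x ξ) := by
    field_simp
  rw [hlocal_eq, hR]
  linarith

theorem lyapunov_nonincreasing_general
    (d₁ d₂ Λ β μ₁ μ₂ : ℝ) (hd₁ : 0 < d₁) (hd₂ : 0 < d₂)
    (hβ : 0 < β) (hμ₁ : 0 < μ₁)
    (f : ℝ → ℝ) (hf0 : f 0 = 0)
    (hf' : ∀ I : ℝ, 0 ≤ I → 0 < deriv f I)
    (hfratio : ∀ I J : ℝ, 0 < I → I ≤ J → f J / J ≤ f I / I)
    (c : ℝ)
    (S I : ℝ → ℝ) (hS : ContDiff ℝ 1 S) (hI : ContDiff ℝ 1 I)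
    (hSeq : ∀ ξ : ℝ, c * deriv S ξ =
      d₁ * (S (ξ + 1) + S (ξ - 1) - 2 * S ξ) + Λ - μ₁ * S ξ - β * S ξ * f (I ξ))
    (hIeq : ∀ ξ : ℝ, c * deriv I ξ =
      d₂ * (I (ξ + 1) + I (ξ - 1) - 2 * I ξ) + β * S ξ * f (I ξ) - μ₂ * I ξ)
    (hSbd : ∀ ξ : ℝ, 0 < S ξ ∧ S ξ < Λ / μ₁) (hIpos : ∀ ξ : ℝ, 0 < I ξ)
    (Sstar Istar : ℝ) (hSstar : 0 < Sstar) (hIstar : 0 < Istar)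
    (heq1 : Λ - β * Sstar * f Istar - μ₁ * Sstar = 0)
    (heq2 : β * Sstar * f Istar - μ₂ * Istar = 0)
    (g : ℝ → ℝ) (hg : ∀ x : ℝ, g x = x - 1 - Real.log x)
    (L : ℝ → ℝ)
    (hL : ∀ ξ : ℝ, L ξ =
      c * Sstar * g (S ξ / Sstar) + c * Istar * g (I ξ / Istar)
        + d₁ * Sstar * ((∫ θ in (0:ℝ)..1, g (S (ξ - θ) / Sstar))
            - ∫ θ in (-1:ℝ)..0, g (S (ξ - θ) / Sstar))
        + d₂ * Istar * ((∫ θ in (0:ℝ)..1, g (I (ξ - θ) / Istar))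
            - ∫ θ in (-1:ℝ)..0, g (I (ξ - θ) / Istar))) :
    ∀ ξ₁ ξ₂ : ℝ, ξ₁ ≤ ξ₂ → L ξ₂ ≤ L ξ₁ := by
  obtain rfl : g = volterra := funext hg
  have hfmono : StrictMonoOn f (Set.Ici 0) :=
    strictMonoOn_of_deriv_pos (convex_Ici 0)
      (fun x hx =>
        (differentiableAt_of_deriv_ne_zero (hf' x hx).ne').continuousAt.continuousWithinAt)
      (fun x hx => hf' x (interior_subset hx))
  have hfpos : ∀ x, 0 < x → 0 < f x := fun x hx =>
    hf0 ▸ hfmono Set.self_mem_Ici (Set.mem_Ici.2 hx.le) hx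
  have hcross : ∀ ξ, (f (I ξ) * Istar - I ξ * f Istar) * (f (I ξ) - f Istar) ≤ 0 := fun ξ =>
    cross_mul_nonpos_of_monotoneOn (hfmono.monotoneOn.mono Set.Ioi_subset_Ici_self)
      (fun x hx y _ hxy => hfratio x y hx hxy) (hIpos ξ) hIstar
  have hLsplit :
      L = fun ξ => lyapunovComponent c d₁ Sstar S ξ + lyapunovComponent c d₂ Istar I ξ :=
    funext fun ξ => by rw [hL]; unfold lyapunovComponent; ring
  have hderiv : ∀ ξ, ∃ E, HasDerivAt L E ξ ∧ E ≤ 0 := by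
    intro ξ
    obtain ⟨ES, hES, hES_le⟩ :=
      lyapunovComponent_hasDerivAt_le (R := Λ - μ₁ * S ξ - β * S ξ * f (I ξ)) hd₁.le hSstar
        (hS.differentiable one_ne_zero) (fun ξ => (hSbd ξ).1) (by rw [hSeq ξ]; ring)
    obtain ⟨EI, hEI, hEI_le⟩ :=
      lyapunovComponent_hasDerivAt_le (R := β * S ξ * f (I ξ) - μ₂ * I ξ) hd₂.le hIstar
        (hI.differentiable one_ne_zero) hIpos (by rw [hIeq ξ]; ring)
    have hreaction := sir_reaction_nonpos hβ.le hμ₁.le (hSbd ξ).1 (hIpos ξ) hSstar hIstar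
      (hfpos _ (hIpos ξ)) (hfpos _ hIstar) heq1 heq2 (hcross ξ)
    exact ⟨ES + EI, hLsplit ▸ hES.add hEI, by linarith⟩
  choose E hE hE_nonpos using hderiv
  exact fun ξ₁ ξ₂ h => antitone_of_hasDerivAt_nonpos hE hE_nonpos h

/-- **Monotonicity of the Lyapunov functional** (Step 4 of the proof of
Theorem 3.1).  Let `(S, I)` be a traveling wave profile with speed `c > 0`,
`0 < S < S₀`, `I > 0`, and let `(S*, I*)` be an endemic equilibrium.  With
`g(x) = x − 1 − ln x`, the Lyapunov functional
`L(ξ) = cS*g(S/S*) + cI*g(I/I*) + d₁S*W₂(ξ) + d₂I*W₃(ξ)` is nonincreasing. -/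
theorem lyapunov_nonincreasing
    (d₁ d₂ Λ β μ₁ μ₂ : ℝ) (hd₁ : 0 < d₁) (hd₂ : 0 < d₂) (hΛ : 0 < Λ)
    (hβ : 0 < β) (hμ₁ : 0 < μ₁) (hμ₂ : 0 < μ₂)
    (f : ℝ → ℝ) (hf0 : f 0 = 0) (hfC1 : ContDiff ℝ 1 f)
    (hf' : ∀ I : ℝ, 0 ≤ I → 0 < deriv f I)
    (hfratio : ∀ I J : ℝ, 0 < I → I ≤ J → f J / J ≤ f I / I)
    (c : ℝ) (hc : 0 < c)
    (S I : ℝ → ℝ) (hS : ContDiff ℝ 1 S) (hI : ContDiff ℝ 1 I)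
    (hSeq : ∀ ξ : ℝ, c * deriv S ξ =
      d₁ * (S (ξ + 1) + S (ξ - 1) - 2 * S ξ) + Λ - μ₁ * S ξ - β * S ξ * f (I ξ))
    (hIeq : ∀ ξ : ℝ, c * deriv I ξ =
      d₂ * (I (ξ + 1) + I (ξ - 1) - 2 * I ξ) + β * S ξ * f (I ξ) - μ₂ * I ξ)
    (hSbd : ∀ ξ : ℝ, 0 < S ξ ∧ S ξ < Λ / μ₁) (hIpos : ∀ ξ : ℝ, 0 < I ξ)
    (Sstar Istar : ℝ) (hSstar : 0 < Sstar) (hIstar : 0 < Istar)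
    (heq1 : Λ - β * Sstar * f Istar - μ₁ * Sstar = 0)
    (heq2 : β * Sstar * f Istar - μ₂ * Istar = 0)
    (g : ℝ → ℝ) (hg : ∀ x : ℝ, g x = x - 1 - Real.log x)
    (L : ℝ → ℝ)
    (hL : ∀ ξ : ℝ, L ξ =
      c * Sstar * g (S ξ / Sstar) + c * Istar * g (I ξ / Istar)
        + d₁ * Sstar * ((∫ θ in (0:ℝ)..1, g (S (ξ - θ) / Sstar))
            - ∫ θ in (-1:ℝ)..0, g (S (ξ - θ) / Sstar))
        + d₂ * Istar * ((∫ θ in (0:ℝ)..1, g (I (ξ - θ) / Istar))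
            - ∫ θ in (-1:ℝ)..0, g (I (ξ - θ) / Istar))) :
    ∀ ξ₁ ξ₂ : ℝ, ξ₁ ≤ ξ₂ → L ξ₂ ≤ L ξ₁ :=
  lyapunov_nonincreasing_general d₁ d₂ Λ β μ₁ μ₂ hd₁ hd₂ hβ hμ₁ f hf0 hf' hfratio c S I hS hI hSeq
    hIeq hSbd hIpos Sstar Istar hSstar hIstar heq1 heq2 g hg L hL
end

section
/- Let g(x) := x − 1 − ln x for x > 0, and let f : (0,∞) → (0,∞) be a function such that f is (strictly) increasing on (0,∞) and I ↦ f(I)/I is nonincreasing on (0,∞). Then for all I > 0 and I* > 0, g(f(I)/f(I*)) − g(I/I*) ≤ (1 − f(I*)/f(I))·(f(I)/f(I*) − I/I*) ≤ 0; in particular g(f(I)/f(I*)) ≤ g(I/I*). -/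
/-!
Put `a = f(I)/f(I*)` and `b = I/I*`. Since `ln b - ln a = ln (b/a) ≤ b/a - 1`, the difference
`g(a) - g(b)` is at most `(a - b) + (b/a - 1) = (1 - 1/a)(a - b)`, and `f(I*)/f(I) = 1/a`.
Monotonicity of `f` and antitonicity of `I ↦ f(I)/I` place `a` between `b` and `1`, so the factors
`1 - 1/a` and `a - b` have opposite signs.
-/

open Real Set

lemma sub_one_sub_log_sub_le {a b : ℝ} (ha : 0 < a) (hb : 0 < b) :
    (a - 1 - log a) - (b - 1 - log b) ≤ (1 - a⁻¹) * (a - b) := by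
  have hlog : log b - log a ≤ b / a - 1 := by
    rw [← log_div hb.ne' ha.ne']
    exact log_le_sub_one_of_pos (div_pos hb ha)
  have hexpand : (1 - a⁻¹) * (a - b) = a - b + (b / a - 1) := by
    field_simp
    ring
  linarith

lemma one_sub_inv_mul_sub_nonpos {a b : ℝ} (ha : 0 < a) (hab : a ∈ uIcc b 1) :
    (1 - a⁻¹) * (a - b) ≤ 0 := by
  rcases mem_uIcc.1 hab with ⟨hba, ha1⟩ | ⟨h1a, hab⟩
  · exact mul_nonpos_of_nonpos_of_nonneg (by linarith [one_le_inv₀ ha |>.2 ha1]) (by linarith)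
  · exact mul_nonpos_of_nonneg_of_nonpos (by linarith [inv_le_one_of_one_le₀ h1a]) (by linarith)

lemma div_mem_uIcc_div_one {f : ℝ → ℝ} (hpos : ∀ x, 0 < x → 0 < f x)
    (hmono : MonotoneOn f (Ioi 0)) (hratio : AntitoneOn (fun x ↦ f x / x) (Ioi 0))
    {x y : ℝ} (hx : 0 < x) (hy : 0 < y) :
    f x / f y ∈ uIcc (x / y) 1 := by
  have hfx := hpos x hx
  have hfy := hpos y hy
  rcases le_total x y with hxy | hyx
  · have hf : f x ≤ f y := hmono hx hy hxy
    have hr : f y / y ≤ f x / x := hratio hx hy hxy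
    rw [div_le_div_iff₀ hy hx] at hr
    refine mem_uIcc.2 (Or.inl ⟨?_, (div_le_one hfy).2 hf⟩)
    rw [div_le_div_iff₀ hy hfy]
    linarith
  · have hf : f y ≤ f x := hmono hy hx hyx
    have hr : f x / x ≤ f y / y := hratio hy hx hyx
    rw [div_le_div_iff₀ hx hy] at hr
    refine mem_uIcc.2 (Or.inr ⟨(one_le_div hfy).2 hf, ?_⟩)
    rw [div_le_div_iff₀ hfy hy]
    linarith

/-- **Key Volterra-type inequality** (used in Step 4 of the proof of Theorem 3.1).
Let `g(x) = x − 1 − ln x` and let `f : (0,∞) → (0,∞)` be strictly increasing with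
`I ↦ f(I)/I` nonincreasing.  Then for all `I, I* > 0`,
`g(f(I)/f(I*)) − g(I/I*) ≤ (1 − f(I*)/f(I))(f(I)/f(I*) − I/I*) ≤ 0`; in particular
`g(f(I)/f(I*)) ≤ g(I/I*)`. -/
theorem g_f_ratio_le
    (g : ℝ → ℝ) (hg : ∀ x : ℝ, g x = x - 1 - Real.log x)
    (f : ℝ → ℝ) (hfpos : ∀ x : ℝ, 0 < x → 0 < f x)
    (hfmono : ∀ x y : ℝ, 0 < x → x < y → f x < f y)
    (hfratio : ∀ x y : ℝ, 0 < x → x ≤ y → f y / y ≤ f x / x) :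
    ∀ I Istar : ℝ, 0 < I → 0 < Istar →
      (g (f I / f Istar) - g (I / Istar) ≤
        (1 - f Istar / f I) * (f I / f Istar - I / Istar)) ∧
      (1 - f Istar / f I) * (f I / f Istar - I / Istar) ≤ 0 ∧
      g (f I / f Istar) ≤ g (I / Istar) := by
  intro I Istar hI hIstar
  have hmono : MonotoneOn f (Ioi 0) :=
    StrictMonoOn.monotoneOn fun x hx y _ hxy ↦ hfmono x y hx hxy
  have hratio : AntitoneOn (fun x ↦ f x / x) (Ioi 0) :=
    fun x hx y _ hxy ↦ hfratio x y hx hxy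
  have ha : 0 < f I / f Istar := div_pos (hfpos I hI) (hfpos Istar hIstar)
  have hdiff := sub_one_sub_log_sub_le ha (div_pos hI hIstar)
  have hsign := one_sub_inv_mul_sub_nonpos ha
    (div_mem_uIcc_div_one hfpos hmono hratio hI hIstar)
  rw [inv_div] at hdiff hsign
  rw [hg, hg]
  exact ⟨hdiff, hsign, by linarith⟩
end

section
/- Let S : ℝ → (0,∞) be continuous, let S* > 0 and d₁ > 0, let g(x) := x − 1 − ln x for x > 0, and define W₂(ξ) := ∫₀¹ g(S(ξ−θ)/S*) dθ − ∫_{−1}⁰ g(S(ξ−θ)/S*) dθ. Then W₂ is differentiable on ℝ with W₂'(ξ) = 2g(S(ξ)/S*) − g(S(ξ−1)/S*) − g(S(ξ+1)/S*); moreover, for every ξ ∈ ℝ, (1 − S*/S(ξ))·d₁·(S(ξ+1) + S(ξ−1) − 2S(ξ)) + d₁·S*·W₂'(ξ) = −d₁·S*·(g(S(ξ−1)/S(ξ)) + g(S(ξ+1)/S(ξ))). -/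
open Real MeasureTheory

/-! After the substitution `u = ξ - θ` each integral in `W₂` is an increment `F (ξ - a) - F (ξ - b)`
of an antiderivative `F` of the continuous integrand, so `W₂'` comes from the fundamental theorem
of calculus. The algebraic identity is the sum of one identity per neighbour
`t ∈ {S (ξ - 1), S (ξ + 1)}`, where the logarithms combine as
`log (t / S*) - log (s / S*) = log (t / s)`. -/

theorem hasDerivAt_integral_comp_sub {f : ℝ → ℝ} (hf : Continuous f) (a b x : ℝ) :
    HasDerivAt (fun y => ∫ θ in a..b, f (y - θ)) (f (x - a) - f (x - b)) x := by
  set F : ℝ → ℝ := fun y => ∫ u in (0 : ℝ)..y, f u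
  have hF : ∀ y, HasDerivAt F (f y) y := fun y =>
    (hf.integral_hasStrictDerivAt 0 y).hasDerivAt
  have hint : ∀ y : ℝ, IntervalIntegrable f volume 0 y := fun y => hf.intervalIntegrable 0 y
  have hcongr : (fun y => ∫ θ in a..b, f (y - θ)) = fun y => F (y - a) - F (y - b) := by
    funext y
    rw [intervalIntegral.integral_comp_sub_left f y,
      intervalIntegral.integral_interval_sub_left (hint (y - a)) (hint (y - b))]
  rw [hcongr]
  exact ((hF (x - a)).comp_sub_const x a).sub ((hF (x - b)).comp_sub_const x b)

theorem lyapunov_neighbour_eq {g : ℝ → ℝ} (hg : ∀ x, g x = x - 1 - Real.log x)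
    {c s t : ℝ} (hc : c ≠ 0) (hs : s ≠ 0) (ht : t ≠ 0) :
    (1 - c / s) * (t - s) + c * (g (s / c) - g (t / c)) = -c * g (t / s) := by
  simp only [hg, Real.log_div hs hc, Real.log_div ht hc, Real.log_div ht hs]
  field_simp
  ring

theorem lyapunov_shift_derivative_general
    (S : ℝ → ℝ) (hScont : Continuous S) (hSpos : ∀ ξ : ℝ, 0 < S ξ)
    (Sstar : ℝ) (hSstar : 0 < Sstar) (d₁ : ℝ)
    (g : ℝ → ℝ) (hg : ∀ x : ℝ, g x = x - 1 - Real.log x)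
    (W₂ : ℝ → ℝ)
    (hW₂ : ∀ ξ : ℝ, W₂ ξ = (∫ θ in (0:ℝ)..1, g (S (ξ - θ) / Sstar))
        - ∫ θ in (-1:ℝ)..0, g (S (ξ - θ) / Sstar)) :
    ∀ ξ : ℝ,
      HasDerivAt W₂
        (2 * g (S ξ / Sstar) - g (S (ξ - 1) / Sstar) - g (S (ξ + 1) / Sstar)) ξ ∧
      (1 - Sstar / S ξ) * (d₁ * (S (ξ + 1) + S (ξ - 1) - 2 * S ξ))
          + d₁ * Sstar *
            (2 * g (S ξ / Sstar) - g (S (ξ - 1) / Sstar) - g (S (ξ + 1) / Sstar))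
        = -(d₁ * Sstar) * (g (S (ξ - 1) / S ξ) + g (S (ξ + 1) / S ξ)) := by
  intro ξ
  have hf : Continuous fun u => g (S u / Sstar) := by
    simp only [hg]
    fun_prop (disch := intro u; exact (div_pos (hSpos u) hSstar).ne')
  constructor
  · rw [funext hW₂]
    refine ((hasDerivAt_integral_comp_sub hf 0 1 ξ).sub
      (hasDerivAt_integral_comp_sub hf (-1) 0 ξ)).congr_deriv ?_
    simp only [sub_zero, sub_neg_eq_add]
    ring
  · have hneighbour := fun t => lyapunov_neighbour_eq hg hSstar.ne' (hSpos ξ).ne'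
      (hSpos t).ne'
    linear_combination d₁ * (hneighbour (ξ - 1) + hneighbour (ξ + 1))

/-- **Derivative of the shift part of the Lyapunov functional** (identity used in
Step 4 of the proof of Theorem 3.1).  For continuous positive `S`, `S* > 0`,
`d₁ > 0` and `g(x) = x − 1 − ln x`, the functional
`W₂(ξ) = ∫₀¹ g(S(ξ−θ)/S*) dθ − ∫_{−1}⁰ g(S(ξ−θ)/S*) dθ` is differentiable with
`W₂'(ξ) = 2g(S(ξ)/S*) − g(S(ξ−1)/S*) − g(S(ξ+1)/S*)`, and
`(1 − S*/S(ξ))d₁(S(ξ+1) + S(ξ−1) − 2S(ξ)) + d₁S*W₂'(ξ)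
  = −d₁S*(g(S(ξ−1)/S(ξ)) + g(S(ξ+1)/S(ξ)))`. -/
theorem lyapunov_shift_derivative
    (S : ℝ → ℝ) (hScont : Continuous S) (hSpos : ∀ ξ : ℝ, 0 < S ξ)
    (Sstar : ℝ) (hSstar : 0 < Sstar) (d₁ : ℝ) (hd₁ : 0 < d₁)
    (g : ℝ → ℝ) (hg : ∀ x : ℝ, g x = x - 1 - Real.log x)
    (W₂ : ℝ → ℝ)
    (hW₂ : ∀ ξ : ℝ, W₂ ξ = (∫ θ in (0:ℝ)..1, g (S (ξ - θ) / Sstar))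
        - ∫ θ in (-1:ℝ)..0, g (S (ξ - θ) / Sstar)) :
    ∀ ξ : ℝ,
      HasDerivAt W₂
        (2 * g (S ξ / Sstar) - g (S (ξ - 1) / Sstar) - g (S (ξ + 1) / Sstar)) ξ ∧
      (1 - Sstar / S ξ) * (d₁ * (S (ξ + 1) + S (ξ - 1) - 2 * S ξ))
          + d₁ * Sstar *
            (2 * g (S ξ / Sstar) - g (S (ξ - 1) / Sstar) - g (S (ξ + 1) / Sstar))
        = -(d₁ * Sstar) * (g (S (ξ - 1) / S ξ) + g (S (ξ + 1) / S ξ)) :=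
  lyapunov_shift_derivative_general S hScont hSpos Sstar hSstar d₁ g hg W₂ hW₂
end
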